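/- arXiv:1507.02955 — 6 statements merged into one kernel-verified Lean document; each statement's English description precedes it below -/
import Mathlib

section
/- If P ⊆ {0,…,r−1}^3 is a pyramid (downward-closed set: (x,y,z) ∈ P and x'≤x, y'≤y, z'≤z implies (x',y',z') ∈ P) of cardinality n, then the associated wedge vector ψ_P = ∧_{p∈P} e_{x_p} ⊗ e_{y_p} ⊗ e_{z_p} ∈ Λ^n((ℂ^r)^{⊗3}) is annihilated by the action of every strictly upper-triangular matrix in each of the three GL(r) factors; that is, ψ_P is a highest weight vector for GL(r)^3. -/
/-! Each factor of `GL(r)³` acts on `e_q` through one coordinate of `q`, and `P` is closed under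
lowering any coordinate. A raising operator `E_{a,b}` therefore turns each factor of `ψ_P` either
into `0` or into another factor of `ψ_P`, so every term of its derivation-wise action vanishes.
For a unipotent upper triangular `u`, expand the wedge multilinearly: a term with nonzero
coefficient lowers coordinates and stays inside `P`, and unless it has a repeated factor it
defines an injective, hence bijective, self-map of `P`. Such a map cannot lower any coordinate
without lowering the coordinate sum, so only the diagonal term, with coefficient `1`, survives. -/

open CategoryTheory MonoidalCategory
open scoped TensorProduct

set_option synthInstance.maxHeartbeats 1000000
set_option maxHeartbeats 1000000
set_option maxRecDepth 4000

namespace KronPaper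

noncomputable section

abbrev Vr (r : ℕ) := Fin r → ℂ

/-- `(ℂ^r)^{⊗3}`. -/
abbrev T3 (r : ℕ) := Vr r ⊗[ℂ] (Vr r ⊗[ℂ] Vr r)

/-- The factorwise action of a triple of endomorphisms of `ℂ^r` on `(ℂ^r)^{⊗3}`. -/
def tripleEnd {r : ℕ} (f g h : Module.End ℂ (Vr r)) : Module.End ℂ (T3 r) :=
  TensorProduct.map f (TensorProduct.map g h)

/-- The induced endomorphism of the exterior algebra of `(ℂ^r)^{⊗3}` (which restricts to every
exterior power `⋀ⁿ (ℂ^r)^{⊗3}`). -/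
def extA {r : ℕ} (f : Module.End ℂ (T3 r)) :
    Module.End ℂ (ExteriorAlgebra ℂ (T3 r)) :=
  (ExteriorAlgebra.map f).toLinearMap

/-- The diagonal endomorphism of `ℂ^r` with entries `t`. -/
def diagEnd {r : ℕ} (t : Fin r → ℂ) : Module.End ℂ (Vr r) :=
  LinearMap.pi fun i => t i • LinearMap.proj i

/-- The weight space of weight `(w1, w2, w3)` for the torus of `GL(r)³`, inside the exterior
algebra of `(ℂ^r)^{⊗3}` (to be intersected with `⋀ⁿ`). -/
def weightSpace (r : ℕ) (w1 w2 w3 : Fin r → ℕ) :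
    Submodule ℂ (ExteriorAlgebra ℂ (T3 r)) where
  carrier := {v | ∀ t1 t2 t3 : Fin r → ℂ,
    extA (tripleEnd (diagEnd t1) (diagEnd t2) (diagEnd t3)) v
      = ((∏ i, t1 i ^ w1 i) * (∏ i, t2 i ^ w2 i) * (∏ i, t3 i ^ w3 i)) • v}
  add_mem' := by
    intro a b ha hb t1 t2 t3
    rw [map_add, ha t1 t2 t3, hb t1 t2 t3, smul_add]
  zero_mem' := by intro t1 t2 t3; rw [map_zero, smul_zero]
  smul_mem' := by
    intro c a ha t1 t2 t3
    rw [map_smul, ha t1 t2 t3, smul_comm]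

/-- Upper triangular with unit diagonal. -/
def IsUpperUnitriangular {r : ℕ} (u : Matrix (Fin r) (Fin r) ℂ) : Prop :=
  (∀ i, u i i = 1) ∧ ∀ i j : Fin r, (j : ℕ) < (i : ℕ) → u i j = 0

/-- Vectors invariant under the unipotent upper triangular subgroup of each `GL(r)` factor;
together with a weight condition this characterizes highest weight vectors. -/
def raisingInvariants (r : ℕ) : Submodule ℂ (ExteriorAlgebra ℂ (T3 r)) where
  carrier := {v | ∀ u : Matrix (Fin r) (Fin r) ℂ, IsUpperUnitriangular u →
    extA (tripleEnd u.mulVecLin 1 1) v = v ∧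
    extA (tripleEnd 1 u.mulVecLin 1) v = v ∧
    extA (tripleEnd 1 1 u.mulVecLin) v = v}
  add_mem' := by
    intro a b ha hb u hu
    obtain ⟨h1, h2, h3⟩ := ha u hu
    obtain ⟨g1, g2, g3⟩ := hb u hu
    exact ⟨by rw [map_add, h1, g1], by rw [map_add, h2, g2], by rw [map_add, h3, g3]⟩
  zero_mem' := by
    intro u hu
    exact ⟨map_zero _, map_zero _, map_zero _⟩
  smul_mem' := by
    intro c a ha u hu
    obtain ⟨h1, h2, h3⟩ := ha u hu
    exact ⟨by rw [map_smul, h1], by rw [map_smul, h2], by rw [map_smul, h3]⟩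

/-- The space of highest weight vectors of weight `(w1, w2, w3)` for `GL(r)³` inside
`⋀ⁿ((ℂ^r)^{⊗3})`.  Its dimension is the multiplicity of the irreducible `GL(r)³`-representation
`V_{w1} ⊗ V_{w2} ⊗ V_{w3}` in `⋀ⁿ((ℂ^r)^{⊗3})`. -/
def hwSpace (r n : ℕ) (w1 w2 w3 : Fin r → ℕ) :
    Submodule ℂ (ExteriorAlgebra ℂ (T3 r)) :=
  weightSpace r w1 w2 w3 ⊓ raisingInvariants r ⊓ ⋀[ℂ]^n (T3 r)

/-- `P ⊆ {0,…,r−1}³` has marginals `(λᵀ, μᵀ, πᵀ)`. -/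
def HasMarginalsF {r : ℕ} (P : Finset (Fin r × Fin r × Fin r)) (l m q : YoungDiagram) : Prop :=
  (∀ i : Fin r, (P.filter (fun p => p.1 = i)).card = l.colLen i) ∧
  (∀ j : Fin r, (P.filter (fun p => p.2.1 = j)).card = m.colLen j) ∧
  (∀ k : Fin r, (P.filter (fun p => p.2.2 = k)).card = q.colLen k)

/-- A downward-closed (pyramid) point set in `{0,…,r−1}³`. -/
def IsPyramidF {r : ℕ} (P : Finset (Fin r × Fin r × Fin r)) : Prop :=
  ∀ x y z x' y' z', (x, y, z) ∈ P → x' ≤ x → y' ≤ y → z' ≤ z → (x', y', z') ∈ P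

/-- The basis vector `e_x ⊗ e_y ⊗ e_z` of `(ℂ^r)^{⊗3}`. -/
def basisVec {r : ℕ} (p : Fin r × Fin r × Fin r) : T3 r :=
  Pi.single p.1 (1 : ℂ) ⊗ₜ[ℂ] (Pi.single p.2.1 (1 : ℂ) ⊗ₜ[ℂ] Pi.single p.2.2 (1 : ℂ))

/-- The elementary matrix `E_{a,b}` (sending `e_b` to `e_a`), as an endomorphism of `ℂ^r`. -/
def elemE {r : ℕ} (a b : Fin r) : Module.End ℂ (Vr r) :=
  (Matrix.single a b (1 : ℂ)).mulVecLin

end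
end KronPaper

theorem Function.Injective.comp_eq_of_comp_le {ι β : Type*} [Finite ι] [AddCommMonoid β]
    [PartialOrder β] [IsOrderedCancelAddMonoid β] {F : ι → ι} (hF : F.Injective) {ω : ι → β}
    (h : ∀ i, ω (F i) ≤ ω i) : ω ∘ F = ω := by
  have := Fintype.ofFinite ι
  funext i
  exact (Finset.sum_eq_sum_iff_of_le fun i _ => h i).1 (hF.bijective_of_finite.sum_comp ω) i
    (Finset.mem_univ i)

theorem Matrix.mulVecLin_single_one {m n R : Type*} [CommSemiring R] [Fintype m] [Fintype n]
    [DecidableEq m] [DecidableEq n] (u : Matrix m n R) (x : n) :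
    u.mulVecLin (Pi.single x 1) = ∑ i, u i x • Pi.single i 1 := by
  ext j
  simp [Pi.single_apply]

namespace AlternatingMap

variable {R M N ι κ : Type*} [CommSemiring R] [AddCommMonoid M] [Module R M] [AddCommMonoid N]
  [Module R N] [DecidableEq ι] {r : ℕ}

theorem map_sum_triangular_eq [Fintype ι] (f : M [⋀^ι]→ₗ[R] N) (b : κ → M) (p : ι → κ)
    (coord : κ → Fin r) (setCoord : κ → Fin r → κ)
    (hcoord : ∀ q i, coord (setCoord q i) = i) (hset : ∀ q, setCoord q (coord q) = q)
    (hdown : ∀ j, ∀ i ≤ coord (p j), ∃ k, setCoord (p j) i = p k)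
    {u : Matrix (Fin r) (Fin r) R} (hu : u.BlockTriangular id) (hdiag : ∀ i, u i i = 1) :
    f (fun j => ∑ i, u i (coord (p j)) • b (setCoord (p j) i)) = f (b ∘ p) := by
  have hterm : ∀ g : ι → Fin r, g ≠ coord ∘ p →
      (∏ j, u (g j) (coord (p j))) • f (fun j => b (setCoord (p j) (g j))) = 0 := by
    intro g hg
    by_cases hle : ∀ j, g j ≤ coord (p j)
    · choose F hF using fun j => hdown j (g j) (hle j)
      refine smul_eq_zero_of_right _ (f.map_eq_zero_of_not_injective _ fun hinj => hg ?_)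
      have hFinj : F.Injective := fun j k hjk => hinj (by simp only [hF, hjk])
      have hweight := hFinj.comp_eq_of_comp_le (ω := fun j => (coord (p j) : ℕ))
        fun j => by simpa [← hF j, hcoord] using hle j
      funext j
      simpa [← hF j, hcoord, Fin.val_inj] using congrFun hweight j
    · obtain ⟨j, hj⟩ := not_forall.1 hle
      rw [Finset.prod_eq_zero (Finset.mem_univ j) (hu (not_le.1 hj)), zero_smul]
  change f.toMultilinearMap _ = _
  rw [MultilinearMap.map_sum, Finset.sum_eq_single (coord ∘ p) (fun g _ hg => by
    rw [MultilinearMap.map_smul_univ]; exact hterm g hg) (by simp)]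
  simp [hdiag, hset, Function.comp_def]

theorem map_update_sum_strictTriangular_eq_zero (f : M [⋀^ι]→ₗ[R] N) (b : κ → M)
    (p : ι → κ) (coord : κ → Fin r) (setCoord : κ → Fin r → κ)
    (hcoord : ∀ q i, coord (setCoord q i) = i)
    (hdown : ∀ j, ∀ i ≤ coord (p j), ∃ k, setCoord (p j) i = p k)
    {u : Matrix (Fin r) (Fin r) R} (hu : ∀ i j, j ≤ i → u i j = 0) (j : ι) :
    f (Function.update (b ∘ p) j (∑ i, u i (coord (p j)) • b (setCoord (p j) i))) = 0 := by
  rw [f.map_update_sum]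
  refine Finset.sum_eq_zero fun i _ => ?_
  rw [f.map_update_smul]
  by_cases hi : i < coord (p j)
  · obtain ⟨k, hk⟩ := hdown j i hi.le
    have hkj : k ≠ j := by
      rintro rfl
      exact hi.ne (by rw [← hk, hcoord])
    rw [hk, ← Function.comp_apply (f := b) (g := p), f.map_update_self _ hkj.symm, smul_zero]
  · rw [hu _ _ (not_lt.1 hi), zero_smul]

end AlternatingMap

namespace KronPaper

variable {r : ℕ}

theorem IsUpperUnitriangular.blockTriangular {u : Matrix (Fin r) (Fin r) ℂ}
    (hu : IsUpperUnitriangular u) : u.BlockTriangular id :=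
  fun i j hij => hu.2 i j hij

theorem tripleEnd_mulVecLin_one_one_basisVec (u : Matrix (Fin r) (Fin r) ℂ)
    (q : Fin r × Fin r × Fin r) :
    tripleEnd u.mulVecLin 1 1 (basisVec q) = ∑ i, u i q.1 • basisVec (i, q.2.1, q.2.2) := by
  rw [tripleEnd, basisVec, TensorProduct.map_tmul, Matrix.mulVecLin_single_one,
    TensorProduct.sum_tmul]
  simp [basisVec, TensorProduct.smul_tmul']

theorem tripleEnd_one_mulVecLin_one_basisVec (u : Matrix (Fin r) (Fin r) ℂ)
    (q : Fin r × Fin r × Fin r) :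
    tripleEnd 1 u.mulVecLin 1 (basisVec q) = ∑ i, u i q.2.1 • basisVec (q.1, i, q.2.2) := by
  rw [tripleEnd, basisVec, TensorProduct.map_tmul, TensorProduct.map_tmul,
    Matrix.mulVecLin_single_one, TensorProduct.sum_tmul, TensorProduct.tmul_sum]
  simp only [basisVec, Module.End.one_apply, ← TensorProduct.smul_tmul', TensorProduct.tmul_smul]

theorem tripleEnd_one_one_mulVecLin_basisVec (u : Matrix (Fin r) (Fin r) ℂ)
    (q : Fin r × Fin r × Fin r) :
    tripleEnd 1 1 u.mulVecLin (basisVec q) = ∑ i, u i q.2.2 • basisVec (q.1, q.2.1, i) := by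
  rw [tripleEnd, basisVec, TensorProduct.map_tmul, TensorProduct.map_tmul,
    Matrix.mulVecLin_single_one, TensorProduct.tmul_sum, TensorProduct.tmul_sum]
  simp [basisVec, TensorProduct.tmul_smul]

theorem wedge_annihilated_and_fixed_of_axis {n : ℕ} {P : Finset (Fin r × Fin r × Fin r)}
    (e : Fin n ≃ {p // p ∈ P}) (coord : Fin r × Fin r × Fin r → Fin r)
    (setCoord : Fin r × Fin r × Fin r → Fin r → Fin r × Fin r × Fin r)
    (hcoord : ∀ q i, coord (setCoord q i) = i) (hset : ∀ q, setCoord q (coord q) = q)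
    (hdown : ∀ q ∈ P, ∀ i ≤ coord q, setCoord q i ∈ P)
    (T : Matrix (Fin r) (Fin r) ℂ → Module.End ℂ (T3 r))
    (hT : ∀ u q, T u (basisVec q) = ∑ i, u i (coord q) • basisVec (setCoord q i)) :
    (∀ a b : Fin r, a < b → ∑ j : Fin n, ExteriorAlgebra.ιMulti ℂ n
        (Function.update (fun j' => basisVec (e j' : Fin r × Fin r × Fin r)) j
          (T (Matrix.single a b 1) (basisVec (e j : Fin r × Fin r × Fin r)))) = 0) ∧
    ∀ u, IsUpperUnitriangular u →
      extA (T u) (ExteriorAlgebra.ιMulti ℂ n fun j => basisVec (e j : Fin r × Fin r × Fin r)) =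
        ExteriorAlgebra.ιMulti ℂ n fun j => basisVec (e j : Fin r × Fin r × Fin r) := by
  have hdown' : ∀ j, ∀ i ≤ coord (e j), ∃ k, setCoord (e j) i = e k := fun j i hi =>
    ⟨e.symm ⟨_, hdown _ (e j).2 i hi⟩, by simp⟩
  refine ⟨fun a b hab => Finset.sum_eq_zero fun j _ => ?_, fun u hu => ?_⟩
  · have hstrict : ∀ i j : Fin r, j ≤ i → Matrix.single a b (1 : ℂ) i j = 0 := by
      rintro i j hji
      rw [Matrix.single_apply, if_neg]
      rintro ⟨rfl, rfl⟩
      exact (not_lt.2 hji) hab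
    rw [hT]
    exact (ExteriorAlgebra.ιMulti ℂ n).map_update_sum_strictTriangular_eq_zero basisVec
      (fun j => (e j : Fin r × Fin r × Fin r)) coord setCoord hcoord hdown' hstrict j
  · rw [extA, AlgHom.toLinearMap_apply, ExteriorAlgebra.map_apply_ιMulti, Function.comp_def]
    simp_rw [hT]
    exact (ExteriorAlgebra.ιMulti ℂ n).map_sum_triangular_eq basisVec
      (fun j => (e j : Fin r × Fin r × Fin r)) coord setCoord hcoord hset hdown'
      hu.blockTriangular hu.1

theorem pyramid_wedge_is_highest_weight_vector_general
    (r n : ℕ) (P : Finset (Fin r × Fin r × Fin r))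
    (hpyr : IsPyramidF P)
    (e : Fin n ≃ {p // p ∈ P}) :
    (∀ a b : Fin r, a < b →
      (∑ j : Fin n, ExteriorAlgebra.ιMulti ℂ n
        (Function.update (fun j' : Fin n => basisVec (e j' : Fin r × Fin r × Fin r)) j
          (tripleEnd (elemE a b) 1 1 (basisVec (e j : Fin r × Fin r × Fin r)))) = 0) ∧
      (∑ j : Fin n, ExteriorAlgebra.ιMulti ℂ n
        (Function.update (fun j' : Fin n => basisVec (e j' : Fin r × Fin r × Fin r)) j
          (tripleEnd 1 (elemE a b) 1 (basisVec (e j : Fin r × Fin r × Fin r)))) = 0) ∧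
      (∑ j : Fin n, ExteriorAlgebra.ιMulti ℂ n
        (Function.update (fun j' : Fin n => basisVec (e j' : Fin r × Fin r × Fin r)) j
          (tripleEnd 1 1 (elemE a b) (basisVec (e j : Fin r × Fin r × Fin r)))) = 0)) ∧
    ExteriorAlgebra.ιMulti ℂ n (fun j : Fin n => basisVec (e j : Fin r × Fin r × Fin r)) ∈
      raisingInvariants r := by
  obtain ⟨hann₁, hfix₁⟩ := wedge_annihilated_and_fixed_of_axis e (fun q => q.1)
    (fun q i => (i, q.2.1, q.2.2)) (fun _ _ => rfl) (fun _ => rfl)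
    (fun q hq i hi => hpyr _ _ _ _ _ _ hq hi le_rfl le_rfl) _
    tripleEnd_mulVecLin_one_one_basisVec
  obtain ⟨hann₂, hfix₂⟩ := wedge_annihilated_and_fixed_of_axis e (fun q => q.2.1)
    (fun q i => (q.1, i, q.2.2)) (fun _ _ => rfl) (fun _ => rfl)
    (fun q hq i hi => hpyr _ _ _ _ _ _ hq le_rfl hi le_rfl) _
    tripleEnd_one_mulVecLin_one_basisVec
  obtain ⟨hann₃, hfix₃⟩ := wedge_annihilated_and_fixed_of_axis e (fun q => q.2.2)
    (fun q i => (q.1, q.2.1, i)) (fun _ _ => rfl) (fun _ => rfl)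
    (fun q hq i hi => hpyr _ _ _ _ _ _ hq le_rfl le_rfl hi) _
    tripleEnd_one_one_mulVecLin_basisVec
  exact ⟨fun a b hab => ⟨hann₁ a b hab, hann₂ a b hab, hann₃ a b hab⟩,
    fun u hu => ⟨hfix₁ u hu, hfix₂ u hu, hfix₃ u hu⟩⟩

/-- If `P ⊆ {0,…,r−1}³` is a pyramid of cardinality `n`, then the wedge vector
`ψ_P = ⋀_{p ∈ P} e_{x_p} ⊗ e_{y_p} ⊗ e_{z_p} ∈ ⋀ⁿ((ℂ^r)^{⊗3})` is annihilated by the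
(derivation-wise) action of every strictly upper triangular matrix `E_{a,b}` (`a < b`) in each
of the three `GL(r)` factors; that is, `ψ_P` is a highest weight vector for `GL(r)³` (in
particular it is fixed by the unipotent upper triangular subgroup of each factor). -/
theorem pyramid_wedge_is_highest_weight_vector
    (r n : ℕ) (P : Finset (Fin r × Fin r × Fin r))
    (hpyr : IsPyramidF P) (hcard : P.card = n)
    (e : Fin n ≃ {p // p ∈ P}) :
    (∀ a b : Fin r, a < b →
      (∑ j : Fin n, ExteriorAlgebra.ιMulti ℂ n
        (Function.update (fun j' : Fin n => basisVec (e j' : Fin r × Fin r × Fin r)) j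
          (tripleEnd (elemE a b) 1 1 (basisVec (e j : Fin r × Fin r × Fin r)))) = 0) ∧
      (∑ j : Fin n, ExteriorAlgebra.ιMulti ℂ n
        (Function.update (fun j' : Fin n => basisVec (e j' : Fin r × Fin r × Fin r)) j
          (tripleEnd 1 (elemE a b) 1 (basisVec (e j : Fin r × Fin r × Fin r)))) = 0) ∧
      (∑ j : Fin n, ExteriorAlgebra.ιMulti ℂ n
        (Function.update (fun j' : Fin n => basisVec (e j' : Fin r × Fin r × Fin r)) j
          (tripleEnd 1 1 (elemE a b) (basisVec (e j : Fin r × Fin r × Fin r)))) = 0)) ∧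
    ExteriorAlgebra.ιMulti ℂ n (fun j : Fin n => basisVec (e j : Fin r × Fin r × Fin r)) ∈
      raisingInvariants r :=
  pyramid_wedge_is_highest_weight_vector_general r n P hpyr e

end KronPaper
end

section
/- For all partitions λ, μ, π of n with at most r columns, p^λ_{μ,π} ≤ k^λ_{μ,π} ≤ t^λ_{μ,π}, where p^λ_{μ,π} is the number of pyramids in {0,…,r−1}^3 with marginals (λ^T, μ^T, π^T) and t^λ_{μ,π} is the number of arbitrary point sets with those marginals. -/
open CategoryTheory MonoidalCategory
open scoped TensorProduct

set_option synthInstance.maxHeartbeats 1000000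
set_option maxHeartbeats 1000000
set_option maxRecDepth 4000

namespace KronPaper

noncomputable section

/-- The Kronecker coefficient `k^λ_{μ,π}`, realized as the dimension of the space of highest
weight vectors of weight `(λᵀ, μᵀ, πᵀ)` for `GL(n)³` in `⋀ⁿ((ℂⁿ)^{⊗3})`, `n = |λ|`
(this equals the multiplicity of the Specht module `[λ]` in `[μ] ⊗ [π]`). -/
def kron (l m q : YoungDiagram) : ℕ :=
  Module.finrank ℂ (hwSpace l.card l.card
    (fun i => l.colLen i) (fun i => m.colLen i) (fun i => q.colLen i))

/-!
Write `e_p = e_x ⊗ e_y ⊗ e_z` for the standard basis of `(ℂ^N)^{⊗3}` and, for `S ⊆ [N]³` with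
`|S| = n`, let `e_S ∈ ⋀ⁿ` be the wedge of the `e_p`, `p ∈ S`, taken in increasing order for a
fixed linear extension of the product order on `[N]³`. The `e_S` form a basis of `⋀ⁿ` on which the
torus acts diagonally, with character determined by the marginals of `S`. Hence a weight vector
is a combination of the `e_S` with the right marginals, which gives the upper bound.

For the lower bound, a unitriangular `u` acting on one factor sends `e_p` to `e_p` plus a
combination of `e_{p'}` with `p' < p` in the product order. If `S` is a pyramid these `p'` lie in
`S` and precede `p` in the chosen linear order, so `u` changes each factor of `e_S` only by
multiples of earlier factors and therefore fixes `e_S`. Thus `e_S` is a highest weight vector, and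
distinct pyramids give linearly independent ones.

Both counts only see points with coordinates below the number of columns, so the box `[r]³` may
be replaced by `[n]³`, where `n = |λ|`.
-/

end
end KronPaper

section General

open Function Module Submodule

namespace AlternatingMap

variable {K M N ι : Type*} [Field K] [AddCommGroup M] [Module K M] [AddCommGroup N] [Module K N]

theorem map_update_eq_zero_of_mem_span [DecidableEq ι] (g : M [⋀^ι]→ₗ[K] N) (v : ι → M) (i : ι)
    {z : M} (hz : z ∈ span K (v '' {i}ᶜ)) : g (update v i z) = 0 := by
  have hv : update v i z '' {i}ᶜ = v '' {i}ᶜ := Set.image_congr fun j hj => update_of_ne hj _ _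
  exact g.map_linearDependent _ fun hli => hli.notMem_span_image (s := {i}ᶜ) (x := i)
    (Set.notMem_compl_iff.2 rfl) (by rwa [update_self, hv])

theorem map_eq_of_sub_mem_span_lt {k : ℕ} (g : M [⋀^Fin k]→ₗ[K] N) (x y : Fin k → M)
    (h : ∀ i, y i - x i ∈ span K (x '' Set.Iio i)) : g y = g x := by
  let z : ℕ → Fin k → M := fun m i => if (i : ℕ) < m then x i else y i
  have hz : ∀ m, g (z m) = g y := by
    intro m
    induction m with
    | zero => simp [z]
    | succ m ih =>
      rcases lt_or_ge m k with hm | hm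
      · set i : Fin k := ⟨m, hm⟩
        have hx : z (m + 1) = update (z m) i (x i) := by
          ext j
          by_cases hj : j = i
          · subst hj; simp [z, i]
          · have : (j : ℕ) ≠ m := fun h => hj (Fin.ext h)
            simp only [z, update_of_ne hj]
            split_ifs <;> first | rfl | omega
        have hspan : y i - x i ∈ span K (z m '' {i}ᶜ) := by
          refine span_mono ?_ (h i)
          rintro _ ⟨j, hj, rfl⟩
          exact ⟨j, ne_of_lt hj, if_pos hj⟩
        have key : g (update (z m) i (y i)) = g (update (z m) i (x i)) := by
          rw [← sub_add_cancel (y i) (x i), g.map_update_add,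
            map_update_eq_zero_of_mem_span g _ i hspan, zero_add]
        have hzi : z m i = y i := if_neg (lt_irrefl m)
        rw [hx, ← key, ← hzi, update_eq_self, ih]
      · have : z (m + 1) = z m := funext fun j => by
          have := j.isLt
          simp only [z]
          rw [if_pos (by omega), if_pos (by omega)]
        rw [this, ih]
  have hk : z k = x := funext fun i => if_pos i.isLt
  rw [← hk, hz]

end AlternatingMap

theorem Finset.prod_orderEmbOfFin {α β : Type*} [LinearOrder α] [CommMonoid β] (s : Finset α)
    {k : ℕ} (h : s.card = k) (f : α → β) : ∏ i, f (s.orderEmbOfFin h i) = ∏ a ∈ s, f a :=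
  calc ∏ i, f (s.orderEmbOfFin h i)
      = ∏ a ∈ Finset.univ.map (s.orderEmbOfFin h).toEmbedding, f a := (Finset.prod_map _ _ _).symm
    _ = ∏ a ∈ s, f a := by rw [Finset.map_orderEmbOfFin_univ]

open scoped Finset in
theorem Finset.prod_comp_eq_prod_pow_card_filter {ι κ M : Type*} [Fintype κ] [DecidableEq κ]
    [CommMonoid M] (s : Finset ι) (f : κ → M) (g : ι → κ) :
    ∏ a ∈ s, f (g a) = ∏ b, f b ^ #{a ∈ s | g a = b} := by
  rw [Finset.prod_comp]
  refine Finset.prod_subset (Finset.subset_univ _) fun b _ hb => ?_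
  rw [Finset.card_eq_zero.2 (Finset.filter_eq_empty_iff.2 fun a ha h =>
    hb (Finset.mem_image.2 ⟨a, ha, h⟩)), pow_zero]

theorem eq_of_forall_prod_pow_eq {ι K : Type*} [Fintype ι] [DecidableEq ι] [CommSemiring K]
    [CharZero K] {f g : ι → ℕ} (h : ∀ t : ι → K, ∏ i, t i ^ f i = ∏ i, t i ^ g i) : f = g := by
  funext a
  have hprod : ∀ e : ι → ℕ, ∏ i, (Pi.mulSingle a 2 : ι → K) i ^ e i = 2 ^ e a := fun e =>
    (Finset.prod_eq_single a (fun i _ hi => by rw [Pi.mulSingle_eq_of_ne hi, one_pow])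
      (by simp)).trans (by rw [Pi.mulSingle_eq_same])
  have := h (Pi.mulSingle a 2 : ι → K)
  rw [hprod, hprod] at this
  exact Nat.pow_right_injective le_rfl (by exact_mod_cast this)

namespace ExteriorAlgebra

open Set.powersetCard

variable {R K M I : Type*} [CommRing R] [Field K] [AddCommGroup M] [Module R M] [Module K M]
  [LinearOrder I] {n : ℕ}

theorem map_ιMulti_family_of_apply_eq_smul (v : I → M) (f : M →ₗ[R] M) (χ : I → R)
    (hf : ∀ i, f (v i) = χ i • v i) (s : Set.powersetCard I n) :
    map f (ιMulti_family R n v s) = (∏ i ∈ s.val, χ i) • ιMulti_family R n v s := by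
  simp only [ιMulti_family, map_apply_ιMulti, comp_def, hf]
  rw [(ιMulti R n).map_smul_univ]
  exact congrArg (· • _) (Finset.prod_orderEmbOfFin _ _ χ)

theorem map_ιMulti_family_eq_self_of_sub_mem_span (v : I → M) (f : M →ₗ[K] M)
    (s : Set.powersetCard I n)
    (hf : ∀ i ∈ s.val, f (v i) - v i ∈ span K (v '' {j | j ∈ s.val ∧ j < i})) :
    map f (ιMulti_family K n v s) = ιMulti_family K n v s := by
  simp only [ιMulti_family, map_apply_ιMulti]
  refine AlternatingMap.map_eq_of_sub_mem_span_lt _ _ _ fun i => span_mono ?_ (hf _ ?_)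
  · rintro _ ⟨j, ⟨hjs, hji⟩, rfl⟩
    obtain ⟨j', rfl⟩ := (mem_range_ofFinEmbEquiv_symm_iff_mem s j).2 hjs
    exact ⟨j', (ofFinEmbEquiv.symm s).lt_iff_lt.1 hji, rfl⟩
  · exact (mem_range_ofFinEmbEquiv_symm_iff_mem s _).1 ⟨i, rfl⟩

end ExteriorAlgebra

theorem Submodule.mem_span_image_of_forall_apply_eq_smul {K V ι T : Type*} [Field K]
    [AddCommGroup V] [Module K V] [Finite ι] {e : ι → V} (he : LinearIndependent K e)
    (f : T → V →ₗ[K] V) (χ : T → ι → K) (hf : ∀ t i, f t (e i) = χ t i • e i) (c : T → K)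
    {v : V} (hv : v ∈ span K (Set.range e)) (hfv : ∀ t, f t v = c t • v) :
    v ∈ span K (e '' {i | ∀ t, χ t i = c t}) := by
  have := Fintype.ofFinite ι
  obtain ⟨a, rfl⟩ := (mem_span_range_iff_exists_fun K).1 hv
  have hχ : ∀ i, a i ≠ 0 → ∀ t, χ t i = c t := by
    intro i hai t
    have h0 : ∑ j, (a j * (χ t j - c t)) • e j = 0 := by
      simp only [mul_sub, sub_smul, Finset.sum_sub_distrib, mul_smul, ← hf, ← map_smul,
        ← map_sum, hfv, Finset.smul_sum, smul_comm (c t), sub_self]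
    exact sub_eq_zero.1
      ((mul_eq_zero.1 (Fintype.linearIndependent_iff.1 he _ h0 i)).resolve_left hai)
  refine sum_mem fun i _ => ?_
  by_cases hai : a i = 0
  · simp [hai]
  · exact smul_mem _ _ (subset_span ⟨i, hχ i hai, rfl⟩)

namespace YoungDiagram

theorem colLen_pos_iff (μ : YoungDiagram) (j : ℕ) : 0 < μ.colLen j ↔ j < μ.rowLen 0 := by
  rw [← mem_iff_lt_colLen, ← mem_iff_lt_rowLen]

theorem rowLen_zero_le_card (μ : YoungDiagram) : μ.rowLen 0 ≤ μ.card := by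
  rw [rowLen_eq_card]
  exact Finset.card_le_card (Finset.filter_subset _ _)

theorem sum_range_colLen (μ : YoungDiagram) {r : ℕ} (h : μ.rowLen 0 ≤ r) :
    ∑ j ∈ Finset.range r, μ.colLen j = μ.card := by
  have hcol : ∀ c ∈ μ.cells, c.2 ∈ Finset.range r := fun c hc =>
    Finset.mem_range.2
      ((mem_iff_lt_rowLen.1 hc).trans_le ((μ.rowLen_anti 0 c.1 c.1.zero_le).trans h))
  rw [YoungDiagram.card, Finset.card_eq_sum_card_fiberwise hcol]
  exact Finset.sum_congr rfl fun j _ => μ.colLen_eq_card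

end YoungDiagram

end General

namespace KronPaper

noncomputable section

section Wedges

open Module Submodule

variable {N n : ℕ}

def cubeBasis (N : ℕ) : Basis (Fin N × Fin N × Fin N) ℂ (T3 N) :=
  (Pi.basisFun ℂ (Fin N)).tensorProduct
    ((Pi.basisFun ℂ (Fin N)).tensorProduct (Pi.basisFun ℂ (Fin N)))

def cubeWedge (N n : ℕ) (s : Set.powersetCard (Fin N × Fin N × Fin N) n) :
    ExteriorAlgebra ℂ (T3 N) :=
  ExteriorAlgebra.ιMulti_family ℂ n (I := LinearExtension (Fin N × Fin N × Fin N)) (cubeBasis N) s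

theorem cubeBasis_apply (p : Fin N × Fin N × Fin N) :
    cubeBasis N p = Pi.single p.1 1 ⊗ₜ[ℂ] (Pi.single p.2.1 1 ⊗ₜ[ℂ] Pi.single p.2.2 1) := by
  simp [cubeBasis, Basis.tensorProduct_apply']

theorem cubeBasis_repr_tmul (x y z : Vr N) (p : Fin N × Fin N × Fin N) :
    (cubeBasis N).repr (x ⊗ₜ[ℂ] (y ⊗ₜ[ℂ] z)) p = x p.1 * (y p.2.1 * z p.2.2) := by
  obtain ⟨a, b, c⟩ := p
  simp [cubeBasis, mul_comm]

theorem linearIndependent_cubeWedge : LinearIndependent ℂ (cubeWedge N n) :=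
  (exteriorPower.ιMulti_family_linearIndependent_ofBasis ℂ n
    (show Basis (LinearExtension (Fin N × Fin N × Fin N)) ℂ (T3 N) from cubeBasis N)).map' _
    (ker_subtype _)

theorem span_cubeWedge : span ℂ (Set.range (cubeWedge N n)) = ⋀[ℂ]^n (T3 N) :=
  exteriorPower.ιMulti_family_span_fixedDegree_of_span ℂ
    (I := LinearExtension (Fin N × Fin N × Fin N)) (cubeBasis N).span_eq

theorem tripleEnd_diagEnd_cubeBasis (t1 t2 t3 : Fin N → ℂ) (p : Fin N × Fin N × Fin N) :
    tripleEnd (diagEnd t1) (diagEnd t2) (diagEnd t3) (cubeBasis N p)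
      = (t1 p.1 * t2 p.2.1 * t3 p.2.2) • cubeBasis N p := by
  have hd : ∀ (t : Fin N → ℂ) a, diagEnd t (Pi.single a 1) = t a • Pi.single a 1 := by
    intro t a; ext j; by_cases h : j = a <;> simp [diagEnd, h]
  simp only [cubeBasis_apply, tripleEnd, TensorProduct.map_tmul, hd, TensorProduct.smul_tmul,
    TensorProduct.tmul_smul, smul_smul]
  ring_nf

theorem tripleEnd_cubeBasis_sub_mem_span {f1 f2 f3 : Module.End ℂ (Vr N)}
    (h1 : IsUpperUnitriangular (LinearMap.toMatrix' f1))
    (h2 : IsUpperUnitriangular (LinearMap.toMatrix' f2))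
    (h3 : IsUpperUnitriangular (LinearMap.toMatrix' f3)) (p : Fin N × Fin N × Fin N) :
    tripleEnd f1 f2 f3 (cubeBasis N p) - cubeBasis N p ∈ span ℂ (cubeBasis N '' Set.Iio p) := by
  have hle : ∀ {f : Module.End ℂ (Vr N)}, IsUpperUnitriangular (LinearMap.toMatrix' f) →
      ∀ a a', f (Pi.single a 1) a' ≠ 0 → a' ≤ a := by
    intro f hf a a' h
    by_contra! hlt
    exact h (by simpa [LinearMap.toMatrix'_apply] using hf.2 a' a hlt)
  have hdiag : ∀ {f : Module.End ℂ (Vr N)}, IsUpperUnitriangular (LinearMap.toMatrix' f) →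
      ∀ a, f (Pi.single a 1) a = 1 := by
    intro f hf a
    simpa [LinearMap.toMatrix'_apply] using hf.1 a
  rw [Basis.mem_span_image]
  intro p' hp'
  rw [Finset.mem_coe, Finsupp.mem_support_iff, map_sub, Finsupp.sub_apply, Basis.repr_self,
    cubeBasis_apply, tripleEnd, TensorProduct.map_tmul, TensorProduct.map_tmul,
    cubeBasis_repr_tmul] at hp'
  by_cases hp : p' = p
  · subst hp
    simp [hdiag h1, hdiag h2, hdiag h3] at hp'
  · rw [Finsupp.single_eq_of_ne hp, sub_zero] at hp'
    obtain ⟨ha, hbc⟩ := mul_ne_zero_iff.1 hp'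
    obtain ⟨hb, hc⟩ := mul_ne_zero_iff.1 hbc
    exact lt_of_le_of_ne
      (Prod.mk_le_mk.2 ⟨hle h1 _ _ ha, Prod.mk_le_mk.2 ⟨hle h2 _ _ hb, hle h3 _ _ hc⟩⟩) hp

theorem isUpperUnitriangular_one : IsUpperUnitriangular (1 : Matrix (Fin N) (Fin N) ℂ) :=
  ⟨Matrix.one_apply_eq, fun _ _ h => Matrix.one_apply_ne (Fin.ne_of_gt h)⟩

theorem cubeWedge_mem_raisingInvariants {s : Set.powersetCard (Fin N × Fin N × Fin N) n}
    (hs : IsPyramidF s.val) : cubeWedge N n s ∈ raisingInvariants N := by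
  have key : ∀ {f1 f2 f3 : Module.End ℂ (Vr N)}, IsUpperUnitriangular (LinearMap.toMatrix' f1) →
      IsUpperUnitriangular (LinearMap.toMatrix' f2) →
      IsUpperUnitriangular (LinearMap.toMatrix' f3) →
      extA (tripleEnd f1 f2 f3) (cubeWedge N n s) = cubeWedge N n s := by
    intro f1 f2 f3 h1 h2 h3
    refine ExteriorAlgebra.map_ιMulti_family_eq_self_of_sub_mem_span
      (I := LinearExtension (Fin N × Fin N × Fin N)) _ _ s
      fun (p : Fin N × Fin N × Fin N) hp =>
        span_mono ?_ (tripleEnd_cubeBasis_sub_mem_span h1 h2 h3 p)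
    rintro _ ⟨p', hp', rfl⟩
    refine ⟨p', ⟨?_, toLinearExtension.monotone.strictMono_of_injective (fun _ _ h => h) hp'⟩, rfl⟩
    obtain ⟨h1, h2, h3⟩ : p'.1 ≤ p.1 ∧ p'.2.1 ≤ p.2.1 ∧ p'.2.2 ≤ p.2.2 :=
      Prod.le_def.1 (le_of_lt (α := Fin N × Fin N × Fin N) hp')
    exact hs _ _ _ _ _ _ hp h1 h2 h3
  intro u hu
  have hu' : IsUpperUnitriangular (LinearMap.toMatrix' u.mulVecLin) := by
    rwa [← Matrix.toLin'_apply', LinearMap.toMatrix'_toLin']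
  have h1 : IsUpperUnitriangular (LinearMap.toMatrix' (1 : Module.End ℂ (Vr N))) := by
    rw [LinearMap.toMatrix'_one]; exact isUpperUnitriangular_one
  exact ⟨key hu' h1 h1, key h1 hu' h1, key h1 h1 hu'⟩

theorem forall_prod_eq_iff_hasMarginalsF (S : Finset (Fin N × Fin N × Fin N))
    (l m q : YoungDiagram) :
    (∀ t1 t2 t3 : Fin N → ℂ, ∏ p ∈ S, t1 p.1 * t2 p.2.1 * t3 p.2.2
      = (∏ i, t1 i ^ l.colLen i) * (∏ i, t2 i ^ m.colLen i) * (∏ i, t3 i ^ q.colLen i)) ↔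
      HasMarginalsF S l m q := by
  simp only [Finset.prod_mul_distrib, Finset.prod_comp_eq_prod_pow_card_filter S _ Prod.fst,
    Finset.prod_comp_eq_prod_pow_card_filter S _ (fun p => p.2.1),
    Finset.prod_comp_eq_prod_pow_card_filter S _ (fun p => p.2.2)]
  constructor
  · intro h
    refine ⟨congrFun (eq_of_forall_prod_pow_eq (K := ℂ) fun t => ?_),
      congrFun (eq_of_forall_prod_pow_eq (K := ℂ) fun t => ?_),
      congrFun (eq_of_forall_prod_pow_eq (K := ℂ) fun t => ?_)⟩
    · simpa using h t 1 1
    · simpa using h 1 t 1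
    · simpa using h 1 1 t
  · rintro ⟨h1, h2, h3⟩ t1 t2 t3
    simp only [h1, h2, h3]

theorem extA_diagEnd_cubeWedge (t1 t2 t3 : Fin N → ℂ)
    (s : Set.powersetCard (Fin N × Fin N × Fin N) n) :
    extA (tripleEnd (diagEnd t1) (diagEnd t2) (diagEnd t3)) (cubeWedge N n s)
      = (∏ p ∈ s.val, t1 p.1 * t2 p.2.1 * t3 p.2.2) • cubeWedge N n s :=
  ExteriorAlgebra.map_ιMulti_family_of_apply_eq_smul (I := LinearExtension (Fin N × Fin N × Fin N))
    _ _ _ (tripleEnd_diagEnd_cubeBasis t1 t2 t3) s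

theorem cubeWedge_mem_weightSpace {l m q : YoungDiagram}
    {s : Set.powersetCard (Fin N × Fin N × Fin N) n} (hs : HasMarginalsF s.val l m q) :
    cubeWedge N n s ∈
      weightSpace N (fun i => l.colLen i) (fun i => m.colLen i) (fun i => q.colLen i) :=
  fun t1 t2 t3 => by
    rw [extA_diagEnd_cubeWedge, (forall_prod_eq_iff_hasMarginalsF _ l m q).2 hs t1 t2 t3]

theorem weightSpace_inf_exteriorPower_le_span (l m q : YoungDiagram) :
    weightSpace N (fun i => l.colLen i) (fun i => m.colLen i) (fun i => q.colLen i) ⊓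
        ⋀[ℂ]^n (T3 N) ≤
      span ℂ (cubeWedge N n '' {s | HasMarginalsF s.val l m q}) := by
  rintro v ⟨hw, hv⟩
  have := mem_span_image_of_forall_apply_eq_smul linearIndependent_cubeWedge
    (fun t : (Fin N → ℂ) × (Fin N → ℂ) × (Fin N → ℂ) =>
      extA (tripleEnd (diagEnd t.1) (diagEnd t.2.1) (diagEnd t.2.2)))
    (fun t s => ∏ p ∈ s.val, t.1 p.1 * t.2.1 p.2.1 * t.2.2 p.2.2)
    (fun t => extA_diagEnd_cubeWedge t.1 t.2.1 t.2.2)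
    (fun t => (∏ i, t.1 i ^ l.colLen i) * (∏ i, t.2.1 i ^ m.colLen i) *
      (∏ i, t.2.2 i ^ q.colLen i))
    (span_cubeWedge.symm ▸ hv) (fun t => hw t.1 t.2.1 t.2.2)
  simpa only [Prod.forall, forall_prod_eq_iff_hasMarginalsF] using this

theorem cubeWedge_mem_hwSpace {l m q : YoungDiagram}
    {s : Set.powersetCard (Fin N × Fin N × Fin N) n} (hm : HasMarginalsF s.val l m q)
    (hp : IsPyramidF s.val) :
    cubeWedge N n s ∈
      hwSpace N n (fun i => l.colLen i) (fun i => m.colLen i) (fun i => q.colLen i) :=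
  ⟨⟨cubeWedge_mem_weightSpace hm, cubeWedge_mem_raisingInvariants hp⟩,
    span_cubeWedge ▸ subset_span ⟨s, rfl⟩⟩

instance (w1 w2 w3 : Fin N → ℕ) : FiniteDimensional ℂ (hwSpace N n w1 w2 w3) :=
  Submodule.finiteDimensional_of_le (S₂ := ⋀[ℂ]^n (T3 N)) inf_le_right

theorem card_eq_of_hasMarginalsF {r : ℕ} {P : Finset (Fin r × Fin r × Fin r)}
    {l m q : YoungDiagram} (hP : HasMarginalsF P l m q) (hl : l.rowLen 0 ≤ r) :
    P.card = l.card := by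
  rw [Finset.card_eq_sum_card_fiberwise (f := Prod.fst) fun _ _ => Finset.mem_univ _,
    Finset.sum_congr rfl fun i _ => hP.1 i, Fin.sum_univ_eq_sum_range (fun j => l.colLen j),
    l.sum_range_colLen hl]

theorem natCard_pyramids_le_finrank_hwSpace {l m q : YoungDiagram} (hl : l.rowLen 0 ≤ N) :
    Nat.card {P : Finset (Fin N × Fin N × Fin N) // HasMarginalsF P l m q ∧ IsPyramidF P} ≤
      finrank ℂ (hwSpace N l.card (fun i => l.colLen i) (fun i => m.colLen i)
        (fun i => q.colLen i)) := by
  classical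
  let s : {P : Finset (Fin N × Fin N × Fin N) // HasMarginalsF P l m q ∧ IsPyramidF P} →
      Set.powersetCard (Fin N × Fin N × Fin N) l.card :=
    fun P => ⟨P.1, Set.powersetCard.mem_iff.2 (card_eq_of_hasMarginalsF P.2.1 hl)⟩
  have hs : Function.Injective s := fun P P' h => by
    have := Subtype.ext_iff.1 h
    exact Subtype.ext this
  rw [Nat.card_eq_fintype_card, ← finrank_span_eq_card (linearIndependent_cubeWedge.comp s hs)]
  refine Submodule.finrank_mono (span_le.2 ?_)
  rintro _ ⟨P, rfl⟩
  exact cubeWedge_mem_hwSpace P.2.1 P.2.2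

theorem finrank_hwSpace_le_natCard (l m q : YoungDiagram) :
    finrank ℂ (hwSpace N n (fun i => l.colLen i) (fun i => m.colLen i) (fun i => q.colLen i)) ≤
      Nat.card {P : Finset (Fin N × Fin N × Fin N) // HasMarginalsF P l m q} := by
  classical
  have hle : hwSpace N n (fun i => l.colLen i) (fun i => m.colLen i) (fun i => q.colLen i) ≤ _ :=
    (inf_le_inf_right _ inf_le_left).trans (weightSpace_inf_exteriorPower_le_span l m q)
  rw [Set.image_eq_range] at hle
  have := FiniteDimensional.span_of_finite ℂ (Set.finite_range fun s :
    {s : Set.powersetCard (Fin N × Fin N × Fin N) n | HasMarginalsF s.val l m q} => cubeWedge N n s)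
  refine (Submodule.finrank_mono hle).trans ((finrank_range_le_card _).trans ?_)
  rw [← Nat.card_eq_fintype_card]
  refine Nat.card_le_card_of_injective (fun s => ⟨s.1.1, s.2⟩) fun s s' h => ?_
  have := Subtype.ext_iff.1 h
  exact Subtype.ext (Subtype.ext this)

end Wedges

section BoxSize

variable {c r : ℕ} {l m q : YoungDiagram}

def boxEmb (h : c ≤ r) : Fin c × Fin c × Fin c ↪ Fin r × Fin r × Fin r :=
  (Fin.castLEEmb h).prodMap ((Fin.castLEEmb h).prodMap (Fin.castLEEmb h))

theorem lt_rowLen_zero_of_mem {α : Type*} {Q : Finset α} {μ : YoungDiagram} {π : α → Fin r}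
    (hQ : ∀ j, (Q.filter (π · = j)).card = μ.colLen j) {x : α} (hx : x ∈ Q) :
    (π x : ℕ) < μ.rowLen 0 := by
  rw [← μ.colLen_pos_iff, ← hQ]
  exact Finset.card_pos.2 ⟨x, Finset.mem_filter.2 ⟨hx, rfl⟩⟩

theorem forall_card_filter_map_iff {α β : Type*} (h : c ≤ r) (e : α ↪ β) {πα : α → Fin c}
    {πβ : β → Fin r} (hπ : ∀ a, πβ (e a) = Fin.castLE h (πα a)) (P : Finset α)
    {μ : YoungDiagram} (hμ : μ.rowLen 0 ≤ c) :
    (∀ j, ((P.map e).filter (πβ · = j)).card = μ.colLen j) ↔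
      ∀ i, (P.filter (πα · = i)).card = μ.colLen i := by
  have key : ∀ j : Fin r,
      ((P.map e).filter (πβ · = j)).card = (P.filter fun a => (πα a : ℕ) = j).card := by
    intro j
    rw [Finset.filter_map, Finset.card_map]
    exact congrArg Finset.card (Finset.filter_congr fun a _ => by simp [hπ, Fin.ext_iff])
  simp only [key]
  constructor
  · intro H i
    simpa [Fin.ext_iff] using H (Fin.castLE h i)
  · intro H j
    by_cases hj : (j : ℕ) < c
    · simpa [Fin.ext_iff] using H ⟨j, hj⟩
    · rw [Nat.eq_zero_of_not_pos fun hpos => hj (((μ.colLen_pos_iff j).1 hpos).trans_le hμ),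
        Finset.card_eq_zero, Finset.filter_eq_empty_iff]
      exact fun a _ ha => hj (ha ▸ (πα a).isLt)

theorem hasMarginalsF_map_boxEmb_iff (h : c ≤ r) (hl : l.rowLen 0 ≤ c) (hm : m.rowLen 0 ≤ c)
    (hq : q.rowLen 0 ≤ c) {P : Finset (Fin c × Fin c × Fin c)} :
    HasMarginalsF (P.map (boxEmb h)) l m q ↔ HasMarginalsF P l m q :=
  and_congr (forall_card_filter_map_iff h (boxEmb h) (πα := Prod.fst) (fun _ => rfl) P hl)
    (and_congr (forall_card_filter_map_iff h (boxEmb h) (πα := fun p => p.2.1) (fun _ => rfl) P hm)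
      (forall_card_filter_map_iff h (boxEmb h) (πα := fun p => p.2.2) (fun _ => rfl) P hq))

theorem isPyramidF_map_boxEmb_iff (h : c ≤ r) {P : Finset (Fin c × Fin c × Fin c)} :
    IsPyramidF (P.map (boxEmb h)) ↔ IsPyramidF P := by
  constructor
  · intro H x y z x' y' z' hp hx hy hz
    exact (Finset.mem_map' (boxEmb h)).1
      (H _ _ _ _ _ _ ((Finset.mem_map' (boxEmb h)).2 hp) hx hy hz)
  · intro H X Y Z X' Y' Z' hmem hX hY hZ
    obtain ⟨⟨x, y, z⟩, hp, he⟩ := Finset.mem_map.1 hmem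
    obtain ⟨rfl, rfl, rfl⟩ : Fin.castLE h x = X ∧ Fin.castLE h y = Y ∧ Fin.castLE h z = Z := by
      simpa [boxEmb] using he
    exact (Finset.mem_map' (boxEmb h)).2 (H x y z ⟨X', lt_of_le_of_lt hX x.isLt⟩
      ⟨Y', lt_of_le_of_lt hY y.isLt⟩ ⟨Z', lt_of_le_of_lt hZ z.isLt⟩ hp hX hY hZ)

theorem exists_map_boxEmb_eq (h : c ≤ r) (hl : l.rowLen 0 ≤ c) (hm : m.rowLen 0 ≤ c)
    (hq : q.rowLen 0 ≤ c) {Q : Finset (Fin r × Fin r × Fin r)} (hQ : HasMarginalsF Q l m q) :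
    ∃ P, Finset.map (boxEmb h) P = Q := by
  obtain ⟨P, -, hP⟩ := Finset.subset_map_iff.1 fun x hx => (Finset.mem_map (f := boxEmb h)).2
    ⟨((⟨x.1, (lt_rowLen_zero_of_mem hQ.1 hx).trans_le hl⟩ : Fin c),
      (⟨x.2.1, (lt_rowLen_zero_of_mem hQ.2.1 hx).trans_le hm⟩ : Fin c),
      (⟨x.2.2, (lt_rowLen_zero_of_mem hQ.2.2 hx).trans_le hq⟩ : Fin c)), Finset.mem_univ _, rfl⟩
  exact ⟨P, hP.symm⟩

theorem natCard_hasMarginalsF_and_eq (h : c ≤ r) (hl : l.rowLen 0 ≤ c) (hm : m.rowLen 0 ≤ c)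
    (hq : q.rowLen 0 ≤ c) {Φc : Finset (Fin c × Fin c × Fin c) → Prop}
    {Φr : Finset (Fin r × Fin r × Fin r) → Prop} (hΦ : ∀ P, Φr (Finset.map (boxEmb h) P) ↔ Φc P) :
    Nat.card {P // HasMarginalsF P l m q ∧ Φc P} =
      Nat.card {Q // HasMarginalsF Q l m q ∧ Φr Q} := by
  have hmarg := fun {P} => hasMarginalsF_map_boxEmb_iff (P := P) h hl hm hq
  refine Nat.card_eq_of_bijective (fun P => ⟨P.1.map (boxEmb h), hmarg.2 P.2.1, (hΦ _).2 P.2.2⟩)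
    ⟨fun P P' hPP' => Subtype.ext (Finset.map_injective _ (congrArg Subtype.val hPP')), fun Q => ?_⟩
  obtain ⟨P, hP⟩ := exists_map_boxEmb_eq h hl hm hq Q.2.1
  exact ⟨⟨P, hmarg.1 (hP ▸ Q.2.1), (hΦ P).1 (hP ▸ Q.2.2)⟩, Subtype.ext hP⟩

theorem natCard_hasMarginalsF_eq (h : c ≤ r) (hl : l.rowLen 0 ≤ c) (hm : m.rowLen 0 ≤ c)
    (hq : q.rowLen 0 ≤ c) :
    Nat.card {P : Finset (Fin c × Fin c × Fin c) // HasMarginalsF P l m q} =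
      Nat.card {Q : Finset (Fin r × Fin r × Fin r) // HasMarginalsF Q l m q} := by
  simpa using natCard_hasMarginalsF_and_eq h hl hm hq (Φc := fun _ => True) (Φr := fun _ => True)
    fun _ => Iff.rfl

end BoxSize

/-- For all partitions `λ, μ, π` of `n` with at most `r` columns,
`p^λ_{μ,π} ≤ k^λ_{μ,π} ≤ t^λ_{μ,π}`, where `p^λ_{μ,π}` is the number of pyramids in
`{0,…,r−1}³` with marginals `(λᵀ, μᵀ, πᵀ)` and `t^λ_{μ,π}` the number of arbitrary point sets
with those marginals. -/
theorem pCount_le_kron_le_tCount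
    (r n : ℕ) (l m q : YoungDiagram)
    (hl : l.card = n) (hm : m.card = n) (hq : q.card = n)
    (hcl : l.rowLen 0 ≤ r) (hcm : m.rowLen 0 ≤ r) (hcq : q.rowLen 0 ≤ r) :
    Nat.card {P : Finset (Fin r × Fin r × Fin r) // HasMarginalsF P l m q ∧ IsPyramidF P} ≤
        kron l m q ∧
      kron l m q ≤
        Nat.card {P : Finset (Fin r × Fin r × Fin r) // HasMarginalsF P l m q} := by
  subst hl
  have hr : min r l.card ≤ r := min_le_left _ _
  have hn : min r l.card ≤ l.card := min_le_right _ _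
  have hl' := le_min hcl l.rowLen_zero_le_card
  have hm' := le_min hcm (hm ▸ m.rowLen_zero_le_card)
  have hq' := le_min hcq (hq ▸ q.rowLen_zero_le_card)
  constructor
  · rw [← natCard_hasMarginalsF_and_eq hr hl' hm' hq' fun _ => isPyramidF_map_boxEmb_iff hr,
      natCard_hasMarginalsF_and_eq hn hl' hm' hq' fun _ => isPyramidF_map_boxEmb_iff hn]
    exact natCard_pyramids_le_finrank_hwSpace l.rowLen_zero_le_card
  · rw [← natCard_hasMarginalsF_eq hr hl' hm' hq', natCard_hasMarginalsF_eq hn hl' hm' hq']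
    exact finrank_hwSpace_le_natCard l m q

end
end KronPaper
end

section
/- Let P_r = {(x,y,z) ∈ ℕ^3 : x+y+z ≤ r−1} be the simplex of side length r. For any point set P ⊆ ℕ^3 with n elements, the sum Σ_{(x,y,z)∈P}(x+y+z) is at least p(n), where p(n) = Σ_{(x,y,z)∈P_r}(x+y+z) + r(n − |P_r|) with r the largest integer such that |P_r| = r(r+1)(r+2)/6 ≤ n; moreover equality holds if and only if P_r ⊆ P ⊊ P_{r+1}. -/
/-! The excess `∑_P w - ∑_S w - r (|P| - |S|)` of a finite set `P` over the sublevel set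
`S = {w < r}` is `∑_{P \ S} (w - r) + ∑_{S \ P} (r - w)`, a sum of nonnegative terms, the second
ones even positive. So it is nonnegative, and it vanishes exactly when `S ⊆ P` and `w ≤ r` on `P`.
For `w (x, y, z) = x + y + z` the sublevel sets are the simplices `P_r`. -/

open CategoryTheory MonoidalCategory
open scoped TensorProduct

set_option synthInstance.maxHeartbeats 1000000
set_option maxHeartbeats 1000000
set_option maxRecDepth 4000

namespace KronPaper

noncomputable section

/-- The simplex `P_r = {(x,y,z) ∈ ℕ³ : x + y + z ≤ r − 1}` of side length `r`. -/
def simplexN (r : ℕ) : Finset (ℕ × ℕ × ℕ) :=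
  (Finset.range r ×ˢ (Finset.range r ×ˢ Finset.range r)).filter
    (fun p => p.1 + p.2.1 + p.2.2 + 1 ≤ r)

/-- `Σ_{(x,y,z) ∈ P} (x + y + z)`, the projection of the barycenter onto the diagonal. -/
def ssum (P : Finset (ℕ × ℕ × ℕ)) : ℕ := ∑ p ∈ P, (p.1 + p.2.1 + p.2.2)

/-- `p(n)` computed with respect to `r`:  the minimal possible value of `ssum` over `n`-element
point sets, when `|P_r| ≤ n < |P_{r+1}|`. -/
def pval (n r : ℕ) : ℕ := ssum (simplexN r) + r * (n - (simplexN r).card)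

/-- The largest `r` with `|P_r| ≤ n`. -/
def rIndex (n : ℕ) : ℕ := Nat.findGreatest (fun r => (simplexN r).card ≤ n) n

/-- `p(n)`: the minimal possible value of `Σ_{(x,y,z)∈P}(x+y+z)` over `n`-element point sets. -/
def pOfN (n : ℕ) : ℕ := pval n (rIndex n)

/-- `Σ_i i·λᵀ_i`. -/
def wsum (l : YoungDiagram) : ℕ := ∑ i ∈ Finset.range (l.rowLen 0), i * l.colLen i

/-- A triple of partitions of `n ≠ 0` is simplex-like if for some `r` all three have at most
`r + 1` columns and `Σ_i i·λᵀ_i + Σ_j j·μᵀ_j + Σ_k k·πᵀ_k = p(n)`. -/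
def SimplexLike (l m q : YoungDiagram) : Prop :=
  l.card ≠ 0 ∧ l.card = m.card ∧ l.card = q.card ∧
  (∃ r : ℕ, l.rowLen 0 ≤ r + 1 ∧ m.rowLen 0 ≤ r + 1 ∧ q.rowLen 0 ≤ r + 1) ∧
  wsum l + wsum m + wsum q = pOfN l.card

section SublevelSet

open Finset

variable {α R : Type*} [DecidableEq α] [CommRing R] [LinearOrder R] [IsStrictOrderedRing R]

lemma sum_sub_sum_sub_mul_card_sub (w : α → R) (r : R) (P S : Finset α) :
    ∑ a ∈ P, w a - ∑ a ∈ S, w a - r * (#P - #S) =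
      ∑ a ∈ P \ S, (w a - r) + ∑ a ∈ S \ P, (r - w a) := by
  have hw := sum_sdiff_sub_sum_sdiff (s₁ := S) (s₂ := P) (f := w)
  have hr := sum_sdiff_sub_sum_sdiff (s₁ := S) (s₂ := P) (f := fun _ => r)
  simp only [sum_const, nsmul_eq_mul] at hr
  simp only [sum_sub_distrib, sum_const, nsmul_eq_mul]
  linear_combination hr - hw

variable {w : α → R} {r : R} {S : Finset α}

lemma sum_add_mul_card_sub_le_sum (hS : ∀ a, a ∈ S ↔ w a < r) (P : Finset α) :
    ∑ a ∈ S, w a + r * (#P - #S) ≤ ∑ a ∈ P, w a := by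
  have hout : 0 ≤ ∑ a ∈ P \ S, (w a - r) := sum_nonneg fun a ha =>
    sub_nonneg.2 (not_lt.1 fun h => (mem_sdiff.1 ha).2 ((hS a).2 h))
  have hin : 0 ≤ ∑ a ∈ S \ P, (r - w a) := sum_nonneg fun a ha =>
    sub_nonneg.2 ((hS a).1 (mem_sdiff.1 ha).1).le
  linarith [sum_sub_sum_sub_mul_card_sub w r P S]

lemma sum_eq_sum_add_mul_card_sub_iff (hS : ∀ a, a ∈ S ↔ w a < r) (P : Finset α) :
    ∑ a ∈ P, w a = ∑ a ∈ S, w a + r * (#P - #S) ↔ S ⊆ P ∧ ∀ a ∈ P, w a ≤ r := by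
  have hout : ∀ a ∈ P \ S, 0 ≤ w a - r := fun a ha =>
    sub_nonneg.2 (not_lt.1 fun h => (mem_sdiff.1 ha).2 ((hS a).2 h))
  have hin : ∀ a ∈ S \ P, 0 < r - w a := fun a ha => sub_pos.2 ((hS a).1 (mem_sdiff.1 ha).1)
  have hexcess : ∑ a ∈ P, w a = ∑ a ∈ S, w a + r * (#P - #S) ↔
      ∑ a ∈ P \ S, (w a - r) + ∑ a ∈ S \ P, (r - w a) = 0 := by
    rw [← sum_sub_sum_sub_mul_card_sub, sub_sub, sub_eq_zero]
  rw [hexcess, add_eq_zero_iff_of_nonneg (sum_nonneg hout) (sum_nonneg fun a ha => (hin a ha).le),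
    sum_eq_zero_iff_of_nonneg hout, sum_eq_zero_iff_of_nonneg fun a ha => (hin a ha).le, and_comm]
  refine and_congr ⟨fun h a ha => ?_, fun h => by simp [sdiff_eq_empty_iff_subset.2 h]⟩
    ⟨fun h a ha => ?_, fun h a ha => ?_⟩
  · by_contra haP
    exact (hin a (mem_sdiff.2 ⟨ha, haP⟩)).ne' (h a (mem_sdiff.2 ⟨ha, haP⟩))
  · by_cases haS : a ∈ S
    · exact ((hS a).1 haS).le
    · exact (sub_eq_zero.1 (h a (mem_sdiff.2 ⟨ha, haS⟩))).le
  · rw [mem_sdiff] at ha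
    exact sub_eq_zero.2 ((h a ha.1).antisymm (sub_nonneg.1 (hout a (mem_sdiff.2 ha))))

end SublevelSet

lemma mem_simplexN {r : ℕ} {p : ℕ × ℕ × ℕ} : p ∈ simplexN r ↔ p.1 + p.2.1 + p.2.2 < r := by
  simp only [simplexN, Finset.mem_filter, Finset.mem_product, Finset.mem_range]
  omega

lemma subset_simplexN_succ {r : ℕ} {P : Finset (ℕ × ℕ × ℕ)} :
    P ⊆ simplexN (r + 1) ↔ ∀ p ∈ P, p.1 + p.2.1 + p.2.2 ≤ r := by
  simp only [Finset.subset_iff, mem_simplexN, Nat.lt_succ_iff]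

theorem barycenter_min_general
    (n r : ℕ)
    (hle : (simplexN r).card ≤ n) (hlt : n < (simplexN (r + 1)).card)
    (P : Finset (ℕ × ℕ × ℕ)) (hP : P.card = n) :
    pval n r ≤ ssum P ∧ (ssum P = pval n r ↔ simplexN r ⊆ P ∧ P ⊂ simplexN (r + 1)) := by
  set w : ℕ × ℕ × ℕ → ℤ := fun p => ((p.1 + p.2.1 + p.2.2 : ℕ) : ℤ)
  have hS : ∀ p, p ∈ simplexN r ↔ w p < r := fun p => by simp only [w, mem_simplexN]; omega
  have hpval : (pval n r : ℤ) = ∑ p ∈ simplexN r, w p + r * (P.card - (simplexN r).card) := by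
    simp only [pval, ssum, w, hP, Nat.cast_add, Nat.cast_mul, Nat.cast_sub hle, Nat.cast_sum]
  have hssum : (ssum P : ℤ) = ∑ p ∈ P, w p := by simp only [ssum, w, Nat.cast_sum]
  have hne : P ≠ simplexN (r + 1) := fun h => hlt.ne (hP ▸ congrArg Finset.card h)
  constructor
  · have hmin := sum_add_mul_card_sub_le_sum hS P
    rw [← hpval, ← hssum] at hmin
    exact_mod_cast hmin
  · rw [← Nat.cast_inj (R := ℤ), hssum, hpval, sum_eq_sum_add_mul_card_sub_iff hS,
      Finset.ssubset_iff_subset_ne, subset_simplexN_succ]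
    simp only [w, Nat.cast_le, hne, ne_eq, not_false_eq_true, and_true]

/-- Let `P_r` be the simplex of side length `r` and let `r` be the largest
integer with `|P_r| = r(r+1)(r+2)/6 ≤ n`.  For any point set `P ⊆ ℕ³` with `n` elements,
`Σ_{(x,y,z)∈P}(x+y+z) ≥ p(n)`, where `p(n) = Σ_{(x,y,z)∈P_r}(x+y+z) + r(n − |P_r|)`; moreover
equality holds if and only if `P_r ⊆ P ⊊ P_{r+1}`. -/
theorem barycenter_min
    (n r : ℕ) (hr : 1 ≤ r)
    (hform : (simplexN r).card = r * (r + 1) * (r + 2) / 6)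
    (hle : (simplexN r).card ≤ n) (hlt : n < (simplexN (r + 1)).card)
    (P : Finset (ℕ × ℕ × ℕ)) (hP : P.card = n) :
    pval n r ≤ ssum P ∧ (ssum P = pval n r ↔ simplexN r ⊆ P ∧ P ⊂ simplexN (r + 1)) :=
  barycenter_min_general n r hle hlt P hP

end
end KronPaper
end

section
/- For partitions λ, μ, π of d, the point-set count t^λ_{μ,π} is positive if and only if there exists an obstruction design of type (λ, μ, π): a 3-layered hypergraph on d vertices where each layer partitions the vertex set with block sizes given by the column lengths of λ, μ, π respectively, and no two vertices lie in the same hyperedge in all three layers. -/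
open CategoryTheory MonoidalCategory
open scoped TensorProduct

set_option synthInstance.maxHeartbeats 1000000
set_option maxHeartbeats 1000000
set_option maxRecDepth 4000

namespace KronPaper

noncomputable section
/-- The `x`-marginal of a point set `P ⊆ ℕ³`. -/
def margX (P : Finset (ℕ × ℕ × ℕ)) (i : ℕ) : ℕ := (P.filter (fun p => p.1 = i)).card

/-- The `y`-marginal of a point set `P ⊆ ℕ³`. -/
def margY (P : Finset (ℕ × ℕ × ℕ)) (j : ℕ) : ℕ := (P.filter (fun p => p.2.1 = j)).card

/-- The `z`-marginal of a point set `P ⊆ ℕ³`. -/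
def margZ (P : Finset (ℕ × ℕ × ℕ)) (k : ℕ) : ℕ := (P.filter (fun p => p.2.2 = k)).card

/-- `P` has marginals `(λᵀ, μᵀ, πᵀ)`, where the transpose is recorded via column lengths. -/
def HasMarginals (P : Finset (ℕ × ℕ × ℕ)) (l m q : YoungDiagram) : Prop :=
  (∀ i, margX P i = l.colLen i) ∧ (∀ j, margY P j = m.colLen j) ∧ (∀ k, margZ P k = q.colLen k)

/-- A pyramid is a downward-closed point set in `ℕ³`. -/
def IsPyramid (P : Finset (ℕ × ℕ × ℕ)) : Prop :=
  ∀ x y z x' y' z', (x, y, z) ∈ P → x' ≤ x → y' ≤ y → z' ≤ z → (x', y', z') ∈ P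

/-- `t^λ_{μ,π}`: the number of point sets with marginals `(λᵀ, μᵀ, πᵀ)`. -/
def tCount (l m q : YoungDiagram) : ℕ :=
  Nat.card {P : Finset (ℕ × ℕ × ℕ) // HasMarginals P l m q}

/-- `p^λ_{μ,π}`: the number of pyramids with marginals `(λᵀ, μᵀ, πᵀ)`. -/
def pCount (l m q : YoungDiagram) : ℕ :=
  Nat.card {P : Finset (ℕ × ℕ × ℕ) // HasMarginals P l m q ∧ IsPyramid P}

/-! A point set with marginals `(λᵀ, μᵀ, πᵀ)` has `|λ|` points, since its `x`-marginal sums to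
`|λ|`. Enumerating it by `Fin d` gives an injective map `v ↦ (f v, g v, h v)` whose coordinate
fibres are exactly the marginals, i.e. an obstruction design; conversely the image of a design is
such a point set. Positivity of the count also needs the point sets to form a finite family: every
coordinate of a point lies below the first row of the corresponding diagram. -/

open Finset

theorem card_eq_of_card_filter_eq {α β γ : Type*} [DecidableEq γ] {s : Finset α} {t : Finset β}
    (f : α → γ) (g : β → γ) (h : ∀ c, #{a ∈ s | f a = c} = #{b ∈ t | g b = c}) : #s = #t := by
  rw [card_eq_sum_card_fiberwise (t := s.image f ∪ t.image g)
      fun a ha => mem_union_left _ (mem_image_of_mem f ha),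
    card_eq_sum_card_fiberwise (t := s.image f ∪ t.image g)
      fun b hb => mem_union_right _ (mem_image_of_mem g hb)]
  exact sum_congr rfl fun c _ => h c

theorem card_filter_image_of_injective {ι α γ : Type*} [Fintype ι] [DecidableEq α] [DecidableEq γ]
    {F : ι → α} (hF : Function.Injective F) (pr : α → γ) (c : γ) :
    #{a ∈ univ.image F | pr a = c} = #{v | pr (F v) = c} := by
  rw [filter_image, card_image_of_injective _ hF]

theorem exists_injective_image_univ_eq {α : Type*} [DecidableEq α] {s : Finset α} {d : ℕ}
    (hs : #s = d) : ∃ F : Fin d → α, Function.Injective F ∧ univ.image F = s := by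
  let e : Fin d ≃ s := (s.equivFinOfCardEq hs).symm
  refine ⟨fun v => e v, Subtype.val_injective.comp e.injective, ?_⟩
  ext a
  simp only [mem_image, mem_univ, true_and]
  exact ⟨fun ⟨v, hv⟩ => hv ▸ (e v).2, fun ha => ⟨e.symm ⟨a, ha⟩, by simp⟩⟩

theorem lt_rowLen_zero_of_card_filter_eq_colLen {α : Type*} {P : Finset α} {pr : α → ℕ}
    {μ : YoungDiagram} (h : ∀ i, #{p ∈ P | pr p = i} = μ.colLen i) {p : α} (hp : p ∈ P) :
    pr p < μ.rowLen 0 := by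
  have hpos : 0 < μ.colLen (pr p) := h (pr p) ▸ card_pos.2 ⟨p, mem_filter.2 ⟨hp, rfl⟩⟩
  rwa [← YoungDiagram.mem_iff_lt_colLen, YoungDiagram.mem_iff_lt_rowLen] at hpos

section Marginals

variable {l m q : YoungDiagram}

theorem card_of_hasMarginals {P : Finset (ℕ × ℕ × ℕ)} (hP : HasMarginals P l m q) :
    #P = l.card :=
  card_eq_of_card_filter_eq Prod.fst Prod.snd fun i => (hP.1 i).trans l.colLen_eq_card

theorem finite_setOf_hasMarginals : {P | HasMarginals P l m q}.Finite := by
  refine (range (l.rowLen 0) ×ˢ range (m.rowLen 0) ×ˢ range (q.rowLen 0)).powerset.finite_toSet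
    |>.subset fun P ⟨hX, hY, hZ⟩ => ?_
  simp only [coe_powerset, Set.mem_preimage, Set.mem_powerset_iff, coe_subset]
  intro p hp
  simp only [mem_product, mem_range]
  exact ⟨lt_rowLen_zero_of_card_filter_eq_colLen hX hp,
    lt_rowLen_zero_of_card_filter_eq_colLen hY hp,
    lt_rowLen_zero_of_card_filter_eq_colLen hZ hp⟩

theorem tCount_pos_iff : 0 < tCount l m q ↔ ∃ P, HasMarginals P l m q := by
  have := finite_setOf_hasMarginals (l := l) (m := m) (q := q)
  rw [tCount, Nat.card_pos_iff, nonempty_subtype]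
  exact ⟨And.left, fun hne => ⟨hne, this.to_subtype⟩⟩

theorem hasMarginals_image_iff {ι : Type*} [Fintype ι] {F : ι → ℕ × ℕ × ℕ}
    (hF : Function.Injective F) :
    HasMarginals (univ.image F) l m q ↔
      (∀ i, #{v | (F v).1 = i} = l.colLen i) ∧ (∀ j, #{v | (F v).2.1 = j} = m.colLen j) ∧
        (∀ k, #{v | (F v).2.2 = k} = q.colLen k) := by
  simp only [HasMarginals, margX, margY, margZ, card_filter_image_of_injective hF]

end Marginals

theorem tCount_pos_iff_obstruction_design_general
    (d : ℕ) (l m q : YoungDiagram)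
    (hl : l.card = d) :
    0 < tCount l m q ↔
      ∃ f g h : Fin d → ℕ,
        (∀ i, (Finset.univ.filter (fun v => f v = i)).card = l.colLen i) ∧
        (∀ j, (Finset.univ.filter (fun v => g v = j)).card = m.colLen j) ∧
        (∀ k, (Finset.univ.filter (fun v => h v = k)).card = q.colLen k) ∧
        Function.Injective (fun v => (f v, g v, h v)) := by
  rw [tCount_pos_iff]
  constructor
  · rintro ⟨P, hP⟩
    obtain ⟨F, hF, rfl⟩ := exists_injective_image_univ_eq ((card_of_hasMarginals hP).trans hl)
    obtain ⟨hX, hY, hZ⟩ := (hasMarginals_image_iff hF).1 hP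
    exact ⟨fun v => (F v).1, fun v => (F v).2.1, fun v => (F v).2.2, hX, hY, hZ, hF⟩
  · rintro ⟨f, g, h, hf, hg, hh, hinj⟩
    exact ⟨_, (hasMarginals_image_iff hinj).2 ⟨hf, hg, hh⟩⟩

/-- For partitions `λ, μ, π` of `d`, the point-set count `t^λ_{μ,π}` is
positive if and only if there exists an obstruction design of type `(λ, μ, π)`: three layers of
block assignments on `d` vertices whose block sizes are the column lengths of `λ, μ, π`
respectively, such that no two vertices lie in the same block in all three layers. -/
theorem tCount_pos_iff_obstruction_design
    (d : ℕ) (l m q : YoungDiagram)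
    (hl : l.card = d) (hm : m.card = d) (hq : q.card = d) :
    0 < tCount l m q ↔
      ∃ f g h : Fin d → ℕ,
        (∀ i, (Finset.univ.filter (fun v => f v = i)).card = l.colLen i) ∧
        (∀ j, (Finset.univ.filter (fun v => g v = j)).card = m.colLen j) ∧
        (∀ k, (Finset.univ.filter (fun v => h v = k)).card = q.colLen k) ∧
        Function.Injective (fun v => (f v, g v, h v)) :=
  tCount_pos_iff_obstruction_design_general d l m q hl

end
end KronPaper
end

section
/- Let λ, μ, π be partitions with |λ| = |μ| + |π|, let ι = |λ| + λ₁, and let 𝜆̃, 𝜇̃, 𝜋̃ be obtained from λ, μ, π by adding a long first row so that each has total size 3ι. Then t^{𝜆̃}_{𝜇̃,𝜋̃} > 0. -/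
open CategoryTheory MonoidalCategory
open scoped TensorProduct

set_option synthInstance.maxHeartbeats 1000000
set_option maxHeartbeats 1000000
set_option maxRecDepth 4000

namespace KronPaper

noncomputable section

/-!
Listing each column index `j` of a diagram `colLen j` times, in increasing order, gives its
column word. Reading arrangements of the column words of `𝜆̃, 𝜇̃, 𝜋̃` position by position gives
`3ι` triples with the prescribed marginals, and they form a point set as soon as they are
pairwise distinct. Take the words of `𝜆̃` and `𝜋̃` increasing and that of `𝜇̃` decreasing. From
position `ι = |λ| + λ₁` on, the word of `𝜆̃` lists the single-cell columns of `𝜆̃`, each once; and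
since only `|μ| + μ₁ ≤ 2ι` letters of the word of `𝜇̃` belong to longer columns, the first `ι`
letters of its reversal are pairwise distinct. So two positions with the same `x`-coordinate
both lie below `ι` and differ in `y`.
-/

section ListZip

variable {α β : Type*}

theorem _root_.List.take_zip (xs : List α) (ys : List β) (k : ℕ) :
    (xs.zip ys).take k = (xs.take k).zip (ys.take k) := by
  simp only [List.zip_eq_zipWith, List.take_zipWith]

theorem _root_.List.drop_zip (xs : List α) (ys : List β) (k : ℕ) :
    (xs.zip ys).drop k = (xs.drop k).zip (ys.drop k) := by
  simp only [List.zip_eq_zipWith, List.drop_zipWith]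

theorem _root_.List.nodup_zip_of_nodup_left {xs : List α} (ys : List β) (h : xs.Nodup) :
    (xs.zip ys).Nodup := by
  induction xs generalizing ys with
  | nil => simp
  | cons x xs ih =>
    rcases ys with _ | ⟨y, ys⟩
    · simp
    · rw [List.nodup_cons] at h
      rw [List.zip_cons_cons, List.nodup_cons]
      exact ⟨fun hmem => h.1 (List.of_mem_zip hmem).1, ih ys h.2⟩

theorem _root_.List.nodup_zip_of_nodup_right (xs : List α) {ys : List β} (h : ys.Nodup) :
    (xs.zip ys).Nodup := by
  rw [← List.zip_swap]
  exact (List.nodup_zip_of_nodup_left xs h).map Prod.swap_injective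

theorem _root_.List.nodup_zip_of_take_drop {xs : List α} {ys : List β} (k : ℕ)
    (hx : (xs.drop k).Nodup) (hdisj : (xs.take k).Disjoint (xs.drop k))
    (hy : (ys.take k).Nodup) : (xs.zip ys).Nodup := by
  rw [← List.take_append_drop k (xs.zip ys), List.take_zip, List.drop_zip, List.nodup_append]
  refine ⟨List.nodup_zip_of_nodup_right _ hy, List.nodup_zip_of_nodup_left _ hx, ?_⟩
  rintro ⟨a, b⟩ hab ⟨c, d⟩ hcd heq
  cases heq
  exact hdisj (List.of_mem_zip hab).1 (List.of_mem_zip hcd).1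

theorem _root_.List.card_filter_toFinset_eq_count [DecidableEq α] [DecidableEq β] {L : List α}
    (hL : L.Nodup) (f : α → β) (b : β) :
    (L.toFinset.filter fun a => f a = b).card = (L.map f).count b := by
  rw [List.count_eq_countP, List.countP_map, List.countP_eq_length_filter,
    ← List.toFinset_card_of_nodup (hL.filter _), List.toFinset_filter]
  simp

end ListZip

theorem _root_.YoungDiagram.rowLen_le_card (μ : YoungDiagram) (i : ℕ) : μ.rowLen i ≤ μ.card :=
  μ.rowLen_eq_card.trans_le (Finset.card_filter_le _ _)

theorem _root_.YoungDiagram.colLen_pos_iff_s16 {μ : YoungDiagram} {j : ℕ} :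
    0 < μ.colLen j ↔ j < μ.rowLen 0 := by
  rw [← YoungDiagram.mem_iff_lt_colLen, YoungDiagram.mem_iff_lt_rowLen]

theorem _root_.YoungDiagram.colLen_eq_succ_of_rowLen_succ {μ ν : YoungDiagram}
    (h : ∀ i, μ.rowLen (i + 1) = ν.rowLen i) {j : ℕ} (hj : j < μ.rowLen 0) :
    μ.colLen j = ν.colLen j + 1 := by
  refine eq_of_forall_lt_iff fun i => ?_
  rcases i with _ | i
  · simpa using YoungDiagram.colLen_pos_iff_s16.2 hj
  · rw [← YoungDiagram.mem_iff_lt_colLen, YoungDiagram.mem_iff_lt_rowLen, h,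
      ← YoungDiagram.mem_iff_lt_rowLen, YoungDiagram.mem_iff_lt_colLen]
    omega

def colWord (μ : YoungDiagram) : List ℕ :=
  (List.range (μ.rowLen 0)).flatMap fun j => List.replicate (μ.colLen j) j

theorem count_colWord (μ : YoungDiagram) (j : ℕ) : (colWord μ).count j = μ.colLen j := by
  rw [colWord, List.count_flatMap]
  change ∑ i ∈ Finset.range _, List.count j (List.replicate _ i) = _
  simp only [List.count_replicate, beq_iff_eq, Finset.sum_ite_eq', Finset.mem_range]
  split_ifs with h
  · rfl
  · exact (Nat.eq_zero_of_not_pos (mt YoungDiagram.colLen_pos_iff_s16.1 h)).symm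

theorem length_colWord (μ : YoungDiagram) : (colWord μ).length = μ.card := by
  have h : (colWord μ : Multiset ℕ) = μ.cells.val.map Prod.snd := by
    ext j
    rw [Multiset.coe_count, count_colWord, Multiset.count_map, μ.colLen_eq_card]
    simp [YoungDiagram.col, Finset.filter, eq_comm]
  simpa using congrArg Multiset.card h

section FirstRow

variable {μ ν : YoungDiagram}

theorem exists_colWord_eq_append (h : ∀ i, μ.rowLen (i + 1) = ν.rowLen i) :
    ∃ H : List ℕ, H.length = ν.card + ν.rowLen 0 ∧ (∀ j ∈ H, j < ν.rowLen 0) ∧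
      colWord μ = H ++ List.range' (ν.rowLen 0) (μ.rowLen 0 - ν.rowLen 0) := by
  have hν : ν.rowLen 0 ≤ μ.rowLen 0 := h 0 ▸ μ.rowLen_anti 0 1 zero_le_one
  refine ⟨(List.range (ν.rowLen 0)).flatMap fun j => List.replicate (ν.colLen j + 1) j,
    ?_, ?_, ?_⟩
  · simp [List.length_flatMap, List.sum_map_add, ← length_colWord, colWord]
  · simp +contextual [List.mem_flatMap]
  · have hsplit : List.range (μ.rowLen 0) =
        List.range (ν.rowLen 0) ++ List.range' (ν.rowLen 0) (μ.rowLen 0 - ν.rowLen 0) := by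
      simpa [List.range_eq_range', Nat.add_sub_cancel' hν] using
        (List.range'_append_1 (s := 0) (m := ν.rowLen 0) (n := μ.rowLen 0 - ν.rowLen 0)).symm
    rw [colWord, hsplit, List.flatMap_append]
    congr 1
    · refine List.flatMap_congr fun j hj => ?_
      rw [List.mem_range] at hj
      rw [YoungDiagram.colLen_eq_succ_of_rowLen_succ h (by omega)]
    · conv_rhs => rw [← List.flatMap_singleton' (List.range' _ _)]
      refine List.flatMap_congr fun j hj => ?_
      rw [List.mem_range'_1] at hj
      rw [YoungDiagram.colLen_eq_succ_of_rowLen_succ h (by omega),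
        Nat.eq_zero_of_not_pos (mt YoungDiagram.colLen_pos_iff_s16.1 (by omega))]
      rfl

theorem nodup_drop_colWord (h : ∀ i, μ.rowLen (i + 1) = ν.rowLen i) :
    ((colWord μ).drop (ν.card + ν.rowLen 0)).Nodup := by
  obtain ⟨H, hlen, -, hw⟩ := exists_colWord_eq_append h
  rw [hw, ← hlen, List.drop_left]
  exact List.nodup_range'

theorem disjoint_take_drop_colWord (h : ∀ i, μ.rowLen (i + 1) = ν.rowLen i) :
    ((colWord μ).take (ν.card + ν.rowLen 0)).Disjoint
      ((colWord μ).drop (ν.card + ν.rowLen 0)) := by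
  obtain ⟨H, hlen, hlt, hw⟩ := exists_colWord_eq_append h
  rw [hw, ← hlen, List.take_left, List.drop_left]
  intro j hH hT
  have := hlt j hH
  rw [List.mem_range'_1] at hT
  omega

theorem nodup_take_reverse_colWord (h : ∀ i, μ.rowLen (i + 1) = ν.rowLen i) {k : ℕ}
    (hk : k + ν.card + ν.rowLen 0 ≤ μ.card) : ((colWord μ).reverse.take k).Nodup := by
  obtain ⟨H, hlen, -, hw⟩ := exists_colWord_eq_append h
  have hlength := length_colWord μ
  rw [hw, List.length_append, List.length_range'] at hlength
  rw [hw, List.reverse_append, List.take_append_of_le_length (by simp; omega)]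
  exact (List.nodup_reverse.2 List.nodup_range').sublist (List.take_sublist _ _)

end FirstRow

theorem hasMarginals_toFinset_zip {l m q : YoungDiagram} {xs ys zs : List ℕ}
    (hxs : xs.Perm (colWord l)) (hys : ys.Perm (colWord m)) (hzs : zs.Perm (colWord q))
    (hlm : l.card = m.card) (hmq : m.card = q.card) (hnodup : (xs.zip (ys.zip zs)).Nodup) :
    HasMarginals (xs.zip (ys.zip zs)).toFinset l m q := by
  have hx := hxs.length_eq
  have hy := hys.length_eq
  have hz := hzs.length_eq
  rw [length_colWord] at hx hy hz
  have hyz : (xs.zip (ys.zip zs)).map Prod.snd = ys.zip zs := List.map_snd_zip (by simp; omega)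
  have hmapx : (xs.zip (ys.zip zs)).map (fun p => p.1) = xs := List.map_fst_zip (by simp; omega)
  have hmapy : (xs.zip (ys.zip zs)).map (fun p => p.2.1) = ys := by
    have h := congrArg (List.map Prod.fst) hyz
    rw [List.map_map, List.map_fst_zip (by omega)] at h
    exact h
  have hmapz : (xs.zip (ys.zip zs)).map (fun p => p.2.2) = zs := by
    have h := congrArg (List.map Prod.snd) hyz
    rw [List.map_map, List.map_snd_zip (by omega)] at h
    exact h
  refine ⟨fun i => ?_, fun j => ?_, fun k => ?_⟩
  · rw [margX, List.card_filter_toFinset_eq_count hnodup, hmapx, hxs.count_eq, count_colWord]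
  · rw [margY, List.card_filter_toFinset_eq_count hnodup, hmapy, hys.count_eq, count_colWord]
  · rw [margZ, List.card_filter_toFinset_eq_count hnodup, hmapz, hzs.count_eq, count_colWord]

theorem subset_range_of_hasMarginals {P : Finset (ℕ × ℕ × ℕ)} {l m q : YoungDiagram}
    (h : HasMarginals P l m q) :
    P ⊆ Finset.range (l.rowLen 0) ×ˢ Finset.range (m.rowLen 0) ×ˢ Finset.range (q.rowLen 0) := by
  obtain ⟨hx, hy, hz⟩ := h
  intro p hp
  have hpx : 0 < margX P p.1 := Finset.card_pos.2 ⟨p, Finset.mem_filter.2 ⟨hp, rfl⟩⟩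
  have hpy : 0 < margY P p.2.1 := Finset.card_pos.2 ⟨p, Finset.mem_filter.2 ⟨hp, rfl⟩⟩
  have hpz : 0 < margZ P p.2.2 := Finset.card_pos.2 ⟨p, Finset.mem_filter.2 ⟨hp, rfl⟩⟩
  rw [hx, YoungDiagram.colLen_pos_iff_s16] at hpx
  rw [hy, YoungDiagram.colLen_pos_iff_s16] at hpy
  rw [hz, YoungDiagram.colLen_pos_iff_s16] at hpz
  simp only [Finset.mem_product, Finset.mem_range]
  exact ⟨hpx, hpy, hpz⟩

theorem tCount_pos_of_hasMarginals {P : Finset (ℕ × ℕ × ℕ)} {l m q : YoungDiagram}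
    (h : HasMarginals P l m q) : 0 < tCount l m q := by
  have hfin : {P | HasMarginals P l m q}.Finite :=
    (Finset.finite_toSet _).subset fun _ hP =>
      Finset.mem_powerset.2 (subset_range_of_hasMarginals hP)
  have : Finite {P // HasMarginals P l m q} := hfin.to_subtype
  have : Nonempty {P // HasMarginals P l m q} := ⟨⟨P, h⟩⟩
  exact Nat.card_pos

theorem tCount_pos_of_long_first_row_general
    (l m q lt mt qt : YoungDiagram)
    (hsum : l.card = m.card + q.card)
    (hlt : ∀ i, lt.rowLen (i + 1) = l.rowLen i)
    (hltc : lt.card = 3 * (l.card + l.rowLen 0))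
    (hmt : ∀ i, mt.rowLen (i + 1) = m.rowLen i)
    (hmtc : mt.card = 3 * (l.card + l.rowLen 0))
    (hqtc : qt.card = 3 * (l.card + l.rowLen 0)) :
    0 < tCount lt mt qt := by
  have hm : m.card + m.rowLen 0 ≤ 2 * (l.card + l.rowLen 0) := by
    have := m.rowLen_le_card 0
    omega
  refine tCount_pos_of_hasMarginals (hasMarginals_toFinset_zip (.refl _) (List.reverse_perm _)
    (.refl _) (by omega) (by omega) ?_)
  refine List.nodup_zip_of_take_drop _ (nodup_drop_colWord hlt)
    (disjoint_take_drop_colWord hlt) ?_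
  rw [List.take_zip]
  exact List.nodup_zip_of_nodup_left _ (nodup_take_reverse_colWord hmt (by omega))

/-- Let `λ, μ, π` be partitions with `|λ| = |μ| + |π|`, let
`ι = |λ| + λ₁`, and let `𝜆̃, 𝜇̃, 𝜋̃` be obtained from `λ, μ, π` by adding a long first row so
that each has total size `3ι`.  Then `t^{𝜆̃}_{𝜇̃,𝜋̃} > 0`. -/
theorem tCount_pos_of_long_first_row
    (l m q lt mt qt : YoungDiagram)
    (hsum : l.card = m.card + q.card)
    (hlt0 : lt.rowLen 0 = 3 * (l.card + l.rowLen 0) - l.card)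
    (hlt : ∀ i, lt.rowLen (i + 1) = l.rowLen i)
    (hltc : lt.card = 3 * (l.card + l.rowLen 0))
    (hmt0 : mt.rowLen 0 = 3 * (l.card + l.rowLen 0) - m.card)
    (hmt : ∀ i, mt.rowLen (i + 1) = m.rowLen i)
    (hmtc : mt.card = 3 * (l.card + l.rowLen 0))
    (hqt0 : qt.rowLen 0 = 3 * (l.card + l.rowLen 0) - q.card)
    (hqt : ∀ i, qt.rowLen (i + 1) = q.rowLen i)
    (hqtc : qt.card = 3 * (l.card + l.rowLen 0)) :
    0 < tCount lt mt qt :=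
  tCount_pos_of_long_first_row_general l m q lt mt qt hsum hlt hltc hmt hmtc hqtc

end
end KronPaper
end

section
/- If t^λ_{μ,π} > 0 and t^{λ'}_{μ',π'} > 0, then t^{λ+λ'}_{μ+μ', π+π'} > 0, where + denotes part-wise addition of partitions. -/
open CategoryTheory MonoidalCategory
open scoped TensorProduct

set_option synthInstance.maxHeartbeats 1000000
set_option maxHeartbeats 1000000
set_option maxRecDepth 4000

namespace YoungDiagram

lemma lt_colLen_iff_lt_rowLen (μ : YoungDiagram) {k t : ℕ} : t < μ.colLen k ↔ k < μ.rowLen t := by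
  rw [← mem_iff_lt_colLen, mem_iff_lt_rowLen]

lemma rowLen_colLen_le (μ : YoungDiagram) (k : ℕ) : μ.rowLen (μ.colLen k) ≤ k :=
  not_lt.1 fun h => lt_irrefl _ (μ.lt_colLen_iff_lt_rowLen.2 h)

lemma colLen_eq_of_lt_rowLen_of_rowLen_le (μ : YoungDiagram) {k v : ℕ}
    (hlt : ∀ t < v, k < μ.rowLen t) (hle : μ.rowLen v ≤ k) : μ.colLen k = v :=
  le_antisymm (not_lt.1 fun h => (μ.lt_colLen_iff_lt_rowLen.1 h).not_ge hle)
    (not_lt.1 fun h => lt_irrefl _ (μ.lt_colLen_iff_lt_rowLen.2 (hlt _ h)))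

end YoungDiagram

namespace KronPaper

open Finset YoungDiagram

section Merge

variable {l l' s : YoungDiagram}

/-- Where column `i` of `l` lands in the merge: after the columns of `l'` that are strictly
longer. -/
def mergeLeft (l l' : YoungDiagram) (i : ℕ) : ℕ := i + l'.rowLen (l.colLen i)

/-- Where a nonempty column `j` of `l'` lands in the merge: after the columns of `l` that are at
least as long. -/
def mergeRight (l l' : YoungDiagram) (j : ℕ) : ℕ := j + l.rowLen (l'.colLen j - 1)

lemma mergeLeft_strictMono : StrictMono (mergeLeft l l') := by
  refine strictMono_nat_of_lt_succ fun i => ?_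
  have := l'.rowLen_anti _ _ (l.colLen_anti i (i + 1) i.le_succ)
  simp only [mergeLeft]
  omega

lemma mergeRight_strictMono : StrictMono (mergeRight l l') := by
  refine strictMono_nat_of_lt_succ fun j => ?_
  have := l.rowLen_anti _ _ (Nat.sub_le_sub_right (l'.colLen_anti j (j + 1) j.le_succ) 1)
  simp only [mergeRight]
  omega

lemma mergeLeft_ne_mergeRight {i j : ℕ} (hj : 0 < l'.colLen j) :
    mergeLeft l l' i ≠ mergeRight l l' j := by
  unfold mergeLeft mergeRight
  rcases le_or_gt (l'.colLen j) (l.colLen i) with hle | hlt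
  · have := l.lt_colLen_iff_lt_rowLen.1 (Nat.sub_one_lt_of_le hj hle)
    have := l'.rowLen_anti _ _ hle
    have := l'.rowLen_colLen_le j
    omega
  · have := l'.lt_colLen_iff_lt_rowLen.1 hlt
    have := l.rowLen_anti _ _ (Nat.le_sub_one_of_lt hlt)
    have := l.rowLen_colLen_le i
    omega

variable (hs : ∀ t, s.rowLen t = l.rowLen t + l'.rowLen t)
include hs

lemma colLen_mergeLeft (i : ℕ) : s.colLen (mergeLeft l l' i) = l.colLen i := by
  refine s.colLen_eq_of_lt_rowLen_of_rowLen_le (fun t ht => ?_) ?_ <;> rw [hs] <;>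
    unfold mergeLeft
  · have := l.lt_colLen_iff_lt_rowLen.1 ht
    have := l'.rowLen_anti _ _ ht.le
    omega
  · have := l.rowLen_colLen_le i
    omega

lemma colLen_mergeRight (j : ℕ) :
    s.colLen (mergeRight l l' j) = l'.colLen j := by
  refine s.colLen_eq_of_lt_rowLen_of_rowLen_le (fun t ht => ?_) ?_ <;> rw [hs] <;>
    unfold mergeRight
  · have := l'.lt_colLen_iff_lt_rowLen.1 ht
    have := l.rowLen_anti _ _ (Nat.le_sub_one_of_lt ht)
    omega
  · have := l'.rowLen_colLen_le j
    have := l.rowLen_anti _ _ (Nat.sub_le (l'.colLen j) 1)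
    omega

/-- The merge hits every nonempty column of `s`: the `l.rowLen 0 + l'.rowLen 0` nonempty columns
of `l` and `l'` land injectively among the equally many nonempty columns of `s`. -/
lemma exists_mergeLeft_eq_or_mergeRight_eq {k : ℕ} (hk : 0 < s.colLen k) :
    (∃ i, 0 < l.colLen i ∧ mergeLeft l l' i = k) ∨
      ∃ j, 0 < l'.colLen j ∧ mergeRight l l' j = k := by
  have pos_iff (μ : YoungDiagram) (i : ℕ) : 0 < μ.colLen i ↔ i < μ.rowLen 0 :=
    μ.lt_colLen_iff_lt_rowLen
  set A := (range (l.rowLen 0)).image (mergeLeft l l')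
  set B := (range (l'.rowLen 0)).image (mergeRight l l')
  have hsub : A ∪ B ⊆ range (s.rowLen 0) := by
    simp only [A, B, union_subset_iff, image_subset_iff, mem_range, ← pos_iff]
    refine ⟨fun i hi => ?_, fun j hj => ?_⟩
    · rwa [colLen_mergeLeft hs]
    · rwa [colLen_mergeRight hs j]
  have hdisj : Disjoint A B := by
    simp only [A, B, disjoint_left, mem_image, mem_range, ← pos_iff]
    rintro _ ⟨i, -, rfl⟩ ⟨j, hj, hij⟩
    exact mergeLeft_ne_mergeRight hj hij.symm
  have hcard : (range (s.rowLen 0)).card ≤ (A ∪ B).card := by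
    rw [card_union_of_disjoint hdisj, card_image_of_injective _ mergeLeft_strictMono.injective,
      card_image_of_injective _ mergeRight_strictMono.injective, card_range, card_range,
      card_range, hs]
  have hk' : k ∈ A ∪ B :=
    (eq_of_subset_of_card_le hsub hcard).symm ▸ mem_range.2 ((pos_iff s k).1 hk)
  simp only [A, B, mem_union, mem_image, mem_range, ← pos_iff] at hk'
  exact hk'

end Merge

section Marginal

variable {α β : Type*} [DecidableEq β]

/-- `margX`, `margY`, `margZ` are `marginal` along the three projections of `ℕ × ℕ × ℕ`. -/
def marginal (π : α → ℕ) (P : Finset α) (i : ℕ) : ℕ := (P.filter fun p => π p = i).card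

lemma marginal_pos_of_mem {π : α → ℕ} {P : Finset α} {p : α} (hp : p ∈ P) :
    0 < marginal π P (π p) :=
  card_pos.2 ⟨p, mem_filter.2 ⟨hp, rfl⟩⟩

lemma marginal_image {π : α → ℕ} {π' : β → ℕ} {F : α → β} {u : ℕ → ℕ} (hF : F.Injective)
    (hπ : ∀ p, π' (F p) = u (π p)) (P : Finset α) (k : ℕ) :
    marginal π' (P.image F) k = (P.filter fun p => u (π p) = k).card := by
  simp only [marginal, filter_image, hπ, card_image_of_injective _ hF]

end Marginal

lemma marginal_union_image_merge {α : Type*} [DecidableEq α] {l l' s : YoungDiagram}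
    (hs : ∀ t, s.rowLen t = l.rowLen t + l'.rowLen t) {π : α → ℕ} {P P' : Finset α}
    (hP : ∀ i, marginal π P i = l.colLen i) (hP' : ∀ j, marginal π P' j = l'.colLen j)
    {F G : α → α} (hF : F.Injective) (hG : G.Injective)
    (hπF : ∀ p, π (F p) = mergeLeft l l' (π p)) (hπG : ∀ p, π (G p) = mergeRight l l' (π p))
    (k : ℕ) : marginal π (P.image F ∪ P'.image G) k = s.colLen k := by
  have hPpos : ∀ p ∈ P, 0 < l.colLen (π p) := fun p hp => hP (π p) ▸ marginal_pos_of_mem hp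
  have hP'pos : ∀ p ∈ P', 0 < l'.colLen (π p) := fun p hp => hP' (π p) ▸ marginal_pos_of_mem hp
  have hdisj : Disjoint (P.image F) (P'.image G) := by
    simp only [disjoint_left, mem_image]
    rintro _ ⟨p, -, rfl⟩ ⟨p', hp', hpp'⟩
    exact mergeLeft_ne_mergeRight (hP'pos p' hp') (by rw [← hπF, ← hπG, hpp'])
  have hsplit : marginal π (P.image F ∪ P'.image G) k =
      (P.filter fun p => mergeLeft l l' (π p) = k).card +
        (P'.filter fun p => mergeRight l l' (π p) = k).card := by
    rw [marginal, filter_union, card_union_of_disjoint (disjoint_filter_filter hdisj),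
      ← marginal, ← marginal, marginal_image hF hπF, marginal_image hG hπG]
  rw [hsplit]
  by_cases hk : 0 < s.colLen k
  · rcases exists_mergeLeft_eq_or_mergeRight_eq hs hk with ⟨i, -, rfl⟩ | ⟨j, hj, rfl⟩
    · simp only [mergeLeft_strictMono.injective.eq_iff, colLen_mergeLeft hs, ← hP i, marginal,
        filter_false_of_mem fun p hp => (mergeLeft_ne_mergeRight (hP'pos p hp)).symm,
        card_empty, add_zero]
    · simp only [mergeRight_strictMono.injective.eq_iff, colLen_mergeRight hs j, ← hP' j,
        marginal, filter_false_of_mem fun p _ => mergeLeft_ne_mergeRight hj, card_empty, zero_add]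
  · have hL : ∀ p ∈ P, mergeLeft l l' (π p) ≠ k := fun p hp h =>
      hk (h ▸ (colLen_mergeLeft hs (π p)).symm ▸ hPpos p hp)
    have hR : ∀ p ∈ P', mergeRight l l' (π p) ≠ k := fun p hp h =>
      hk (h ▸ (colLen_mergeRight hs (π p)).symm ▸ hP'pos p hp)
    rw [filter_false_of_mem hL, filter_false_of_mem hR, card_empty, Nat.eq_zero_of_not_pos hk]

lemma hasMarginals_union_image_merge {l m q l' m' q' s1 s2 s3 : YoungDiagram}
    (hs1 : ∀ i, s1.rowLen i = l.rowLen i + l'.rowLen i)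
    (hs2 : ∀ i, s2.rowLen i = m.rowLen i + m'.rowLen i)
    (hs3 : ∀ i, s3.rowLen i = q.rowLen i + q'.rowLen i) {P P' : Finset (ℕ × ℕ × ℕ)}
    (hP : HasMarginals P l m q) (hP' : HasMarginals P' l' m' q') :
    HasMarginals
      (P.image (Prod.map (mergeLeft l l') (Prod.map (mergeLeft m m') (mergeLeft q q'))) ∪
        P'.image (Prod.map (mergeRight l l') (Prod.map (mergeRight m m') (mergeRight q q'))))
      s1 s2 s3 := by
  have hF := (mergeLeft_strictMono (l := l) (l' := l')).injective.prodMap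
    ((mergeLeft_strictMono (l := m) (l' := m')).injective.prodMap
      (mergeLeft_strictMono (l := q) (l' := q')).injective)
  have hG := (mergeRight_strictMono (l := l) (l' := l')).injective.prodMap
    ((mergeRight_strictMono (l := m) (l' := m')).injective.prodMap
      (mergeRight_strictMono (l := q) (l' := q')).injective)
  exact ⟨marginal_union_image_merge hs1 hP.1 hP'.1 hF hG (fun _ => rfl) (fun _ => rfl),
    marginal_union_image_merge hs2 hP.2.1 hP'.2.1 hF hG (fun _ => rfl) (fun _ => rfl),
    marginal_union_image_merge hs3 hP.2.2 hP'.2.2 hF hG (fun _ => rfl) (fun _ => rfl)⟩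

lemma finite_hasMarginals (l m q : YoungDiagram) :
    Finite {P : Finset (ℕ × ℕ × ℕ) // HasMarginals P l m q} := by
  have hbox (P : Finset (ℕ × ℕ × ℕ)) (hP : HasMarginals P l m q) :
      P ⊆ range (l.rowLen 0) ×ˢ range (m.rowLen 0) ×ˢ range (q.rowLen 0) := by
    intro p hp
    simp only [mem_product, mem_range, ← lt_colLen_iff_lt_rowLen, ← hP.1 p.1, ← hP.2.1 p.2.1,
      ← hP.2.2 p.2.2]
    exact ⟨marginal_pos_of_mem (π := Prod.fst) hp,
      marginal_pos_of_mem (π := fun x : ℕ × ℕ × ℕ => x.2.1) hp,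
      marginal_pos_of_mem (π := fun x : ℕ × ℕ × ℕ => x.2.2) hp⟩
  exact ((range _ ×ˢ range _ ×ˢ range _).powerset.finite_toSet.subset
    fun P hP => mem_powerset.2 (hbox P hP)).to_subtype

/-- If `t^λ_{μ,π} > 0` and `t^{λ'}_{μ',π'} > 0`, then
`t^{λ+λ'}_{μ+μ',π+π'} > 0`, where `+` denotes part-wise addition of partitions. -/
theorem tCount_pos_add
    (l m q l' m' q' s1 s2 s3 : YoungDiagram)
    (h1 : 0 < tCount l m q) (h2 : 0 < tCount l' m' q')
    (hs1 : ∀ i, s1.rowLen i = l.rowLen i + l'.rowLen i)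
    (hs2 : ∀ i, s2.rowLen i = m.rowLen i + m'.rowLen i)
    (hs3 : ∀ i, s3.rowLen i = q.rowLen i + q'.rowLen i) :
    0 < tCount s1 s2 s3 := by
  obtain ⟨⟨P, hP⟩⟩ := (Nat.card_pos_iff.1 h1).1
  obtain ⟨⟨P', hP'⟩⟩ := (Nat.card_pos_iff.1 h2).1
  exact Nat.card_pos_iff.2
    ⟨⟨⟨_, hasMarginals_union_image_merge hs1 hs2 hs3 hP hP'⟩⟩, finite_hasMarginals s1 s2 s3⟩

end KronPaper
end
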